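/- arXiv:2005.04460 — 9 statements merged into one kernel-verified Lean document; each statement's English description precedes it below -/
import Mathlib

section
/- Let G be a finite subgroup of GL(V) such that the subspace V^G of G-fixed vectors has dimension 1, and let f be a nonzero homogeneous G-invariant polynomial function on V. If f vanishes at some (equivalently, every) nonzero vector v of V^G, then v is a singular point of the projective hypersurface Z(f): all partial derivatives of f vanish at v. -/
noncomputable section
open MvPolynomial Matrix

/-- The subspace of vectors fixed by every element of a set of invertible matrices. -/
def fixedSpace {n : ℕ} (S : Set (GL (Fin n) ℂ)) : Submodule ℂ (Fin n → ℂ) where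
  carrier := {v | ∀ g ∈ S, (g : Matrix (Fin n) (Fin n) ℂ).mulVec v = v}
  add_mem' := by
    intro a b ha hb g hg
    rw [Matrix.mulVec_add, ha g hg, hb g hg]
  zero_mem' := by
    intro g hg
    simp
  smul_mem' := by
    intro c a ha g hg
    rw [Matrix.mulVec_smul, ha g hg]

/-! The gradient `u` of `f` at `v` is a `G`-invariant linear form (chain rule, since `G` fixes `f`
and `v`) vanishing on `v` (Euler's identity, since `f v = 0`). Averaging over the finite group
projects onto `V^G = ℂ v`, so an invariant linear form vanishing on `v` vanishes everywhere. -/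

namespace MvPolynomial

section CommSemiring

variable {σ τ R : Type*} [CommSemiring R]

theorem eval_aeval (w : τ → R) (s : σ → MvPolynomial τ R) (f : MvPolynomial σ R) :
    eval w (aeval s f) = eval (fun j => eval w (s j)) f := by
  rw [← coe_aeval_eq_eval, ← coe_aeval_eq_eval]
  exact aeval_bind₁ w s f

variable [Fintype σ]

theorem pderiv_aeval (s : σ → MvPolynomial τ R) (f : MvPolynomial σ R) (k : τ) :
    pderiv k (aeval s f) = ∑ j, aeval s (pderiv j f) * pderiv k (s j) := by
  classical
  induction f using MvPolynomial.induction_on with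
  | C a => simp
  | add p q hp hq => simp only [map_add, hp, hq, add_mul, Finset.sum_add_distrib]
  | mul_X p j hp =>
    simp only [map_mul, aeval_X, pderiv_mul, hp, pderiv_X, map_add, add_mul,
      Finset.sum_add_distrib, Finset.sum_mul]
    simp [Pi.single_apply, mul_right_comm, add_comm]

def linearSubst (A : Matrix σ σ R) : σ → MvPolynomial σ R :=
  fun j => ∑ i, C (A j i) * X i

theorem eval_linearSubst (A : Matrix σ σ R) (w : σ → R) :
    (fun j => eval w (linearSubst A j)) = A *ᵥ w := by
  ext j
  simp [linearSubst, mulVec, dotProduct]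

theorem pderiv_linearSubst (A : Matrix σ σ R) (j k : σ) :
    pderiv k (linearSubst A j) = C (A j k) := by
  classical
  simp [linearSubst, pderiv_X, Pi.single_apply]

def differentialAt (f : MvPolynomial σ R) (v : σ → R) : (σ → R) →ₗ[R] R :=
  Fintype.linearCombination R fun i => eval v (pderiv i f)

theorem differentialAt_apply (f : MvPolynomial σ R) (v w : σ → R) :
    differentialAt f v w = w ⬝ᵥ fun i => eval v (pderiv i f) :=
  Fintype.linearCombination_apply R _ w

theorem differentialAt_single [DecidableEq σ] (f : MvPolynomial σ R) (v : σ → R) (i : σ) :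
    differentialAt f v (Pi.single i 1) = eval v (pderiv i f) := by
  rw [differentialAt_apply, single_dotProduct, one_mul]

theorem IsHomogeneous.differentialAt_self {f : MvPolynomial σ R} {e : ℕ} (hf : f.IsHomogeneous e)
    (v : σ → R) : differentialAt f v v = e * eval v f := by
  have := congrArg (eval v) hf.sum_X_mul_pderiv
  simpa [differentialAt_apply, dotProduct, nsmul_eq_mul] using this

end CommSemiring

section InfiniteDomain

variable {σ R : Type*} [Fintype σ] [CommRing R] [IsDomain R] [Infinite R]
  {A : Matrix σ σ R} {f : MvPolynomial σ R}

theorem aeval_linearSubst_of_forall_eval_mulVec (hinv : ∀ w, eval (A *ᵥ w) f = eval w f) :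
    aeval (linearSubst A) f = f :=
  MvPolynomial.funext fun w => by rw [eval_aeval, eval_linearSubst, hinv]

theorem vecMul_gradient_of_forall_eval_mulVec (hinv : ∀ w, eval (A *ᵥ w) f = eval w f)
    {v : σ → R} (hv : A *ᵥ v = v) :
    (fun i => eval v (pderiv i f)) ᵥ* A = fun i => eval v (pderiv i f) := by
  ext k
  conv_rhs => rw [← aeval_linearSubst_of_forall_eval_mulVec hinv, pderiv_aeval]
  simp only [map_sum, eval_mul, eval_aeval, eval_linearSubst, hv, pderiv_linearSubst, eval_C]
  rfl

theorem differentialAt_mulVec (hinv : ∀ w, eval (A *ᵥ w) f = eval w f)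
    {v : σ → R} (hv : A *ᵥ v = v) (w : σ → R) :
    differentialAt f v (A *ᵥ w) = differentialAt f v w := by
  rw [differentialAt_apply, differentialAt_apply, dotProduct_comm, dotProduct_mulVec,
    vecMul_gradient_of_forall_eval_mulVec hinv hv, dotProduct_comm]

end InfiniteDomain

end MvPolynomial

namespace Representation

variable {k G V W : Type*} [CommRing k] [Group G] [AddCommGroup V] [Module k V]
  [AddCommGroup W] [Module k W] [Fintype G] [Invertible (Fintype.card G : k)]

theorem apply_averageMap {ρ : Representation k G V} {φ : V →ₗ[k] W}
    (hφ : ∀ g, φ ∘ₗ ρ g = φ) (w : V) : φ (averageMap ρ w) = φ w := by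
  have hφ' : ∀ g, φ (ρ g w) = φ w := fun g => LinearMap.congr_fun (hφ g) w
  simp [GroupAlgebra.average, hφ', Finset.card_univ, ← Nat.cast_smul_eq_nsmul k, smul_smul]

theorem eq_zero_of_comp_eq_of_invariants_le_ker {ρ : Representation k G V} {φ : V →ₗ[k] W}
    (hφ : ∀ g, φ ∘ₗ ρ g = φ) (hker : ρ.invariants ≤ LinearMap.ker φ) : φ = 0 := by
  ext w
  rw [← apply_averageMap hφ]
  exact hker (averageMap_invariant ρ w)

end Representation

def definingRep {n k : Type*} [Fintype n] [DecidableEq n] [CommRing k] (G : Subgroup (GL n k)) :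
    Representation k G (n → k) :=
  Matrix.toLinAlgEquiv'.toMonoidHom.comp ((Units.coeHom _).comp G.subtype)

theorem invariants_definingRep {n : ℕ} (G : Subgroup (GL (Fin n) ℂ)) :
    (definingRep G).invariants = fixedSpace (G : Set (GL (Fin n) ℂ)) := by
  ext v
  exact ⟨fun hv g hg => hv ⟨g, hg⟩, fun hv g => hv g g.2⟩

theorem Submodule.eq_span_singleton_of_finrank_eq_one {K V : Type*} [DivisionRing K]
    [AddCommGroup V] [Module K V] {W : Submodule K V} (hW : Module.finrank K W = 1) {v : V}
    (hv : v ∈ W) (hv0 : v ≠ 0) : W = K ∙ v := by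
  have : FiniteDimensional K W := Module.finite_of_finrank_eq_succ hW
  refine (Submodule.eq_of_le_of_finrank_eq ?_ ?_).symm
  · exact Submodule.span_le.mpr (Set.singleton_subset_iff.mpr hv)
  · rw [finrank_span_singleton hv0, hW]

theorem stmt_2_general {n e : ℕ} (G : Subgroup (GL (Fin n) ℂ)) (hG : Finite G)
    (hdim : Module.finrank ℂ (fixedSpace (G : Set (GL (Fin n) ℂ))) = 1)
    (f : MvPolynomial (Fin n) ℂ) (hhom : f.IsHomogeneous e)
    (hinv : ∀ g ∈ G, ∀ w : Fin n → ℂ,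
      MvPolynomial.eval ((g : Matrix (Fin n) (Fin n) ℂ).mulVec w) f = MvPolynomial.eval w f)
    (v : Fin n → ℂ) (hv : v ∈ fixedSpace (G : Set (GL (Fin n) ℂ))) (hv0 : v ≠ 0)
    (hfv : MvPolynomial.eval v f = 0) :
    ∀ i, MvPolynomial.eval v (pderiv i f) = 0 := by
  have : Fintype G := Fintype.ofFinite G
  have : Invertible (Fintype.card G : ℂ) :=
    invertibleOfNonzero (Nat.cast_ne_zero.mpr Fintype.card_ne_zero)
  have hdiff_inv : ∀ g, differentialAt f v ∘ₗ definingRep G g = differentialAt f v := fun g =>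
    LinearMap.ext (differentialAt_mulVec (hinv g g.2) (hv g g.2))
  have hker : (definingRep G).invariants ≤ LinearMap.ker (differentialAt f v) := by
    rw [invariants_definingRep, Submodule.eq_span_singleton_of_finrank_eq_one hdim hv hv0,
      Submodule.span_le, Set.singleton_subset_iff, SetLike.mem_coe, LinearMap.mem_ker,
      hhom.differentialAt_self, hfv, mul_zero]
  intro i
  classical
  rw [← differentialAt_single,
    Representation.eq_zero_of_comp_eq_of_invariants_le_ker hdiff_inv hker, LinearMap.zero_apply]

theorem stmt_2 {n e : ℕ} (G : Subgroup (GL (Fin n) ℂ)) (hG : Finite G)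
    (hdim : Module.finrank ℂ (fixedSpace (G : Set (GL (Fin n) ℂ))) = 1)
    (f : MvPolynomial (Fin n) ℂ) (hf0 : f ≠ 0) (hhom : f.IsHomogeneous e)
    (hinv : ∀ g ∈ G, ∀ w : Fin n → ℂ,
      MvPolynomial.eval ((g : Matrix (Fin n) (Fin n) ℂ).mulVec w) f = MvPolynomial.eval w f)
    (v : Fin n → ℂ) (hv : v ∈ fixedSpace (G : Set (GL (Fin n) ℂ))) (hv0 : v ≠ 0)
    (hfv : MvPolynomial.eval v f = 0) :
    ∀ i, MvPolynomial.eval v (pderiv i f) = 0 :=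
  stmt_2_general G hG hdim f hhom hinv v hv hv0 hfv
end
end

section
/- Let G be a finite subgroup of GL(V), let H be a subgroup of G whose fixed subspace V^H has dimension 1, and let v be a nonzero vector spanning V^H. Let f₁ and f₂ be homogeneous G-invariant polynomial functions on V of the same degree with f₁(v) ≠ 0, and set λ = f₂(v)/f₁(v). Then every point of the G-orbit of v is a singular point of the hypersurface Z(f₂ − λ·f₁): for every g ∈ G, all partial derivatives of f₂ − λ·f₁ vanish at g·v. -/
/-!
Put `F = f₂ - λ f₁`: it is `G`-invariant, homogeneous of degree `e` and vanishes at `v`.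
Invariance transports gradients along orbits (`∇F(w) = ∇F(gw) g`), so it suffices that
`d = ∇F(v)` is zero. Invariance under the stabiliser `H` of `v` makes the covector `d`
`H`-invariant, and Euler's identity gives `d · v = e F(v) = 0`, so `d` kills `V^H = ℂ v`.
An `H`-invariant covector is determined by its values on `V^H`, because averaging over the
finite group `H` projects `V` onto `V^H`; hence `d = 0`.
-/

noncomputable section
open MvPolynomial Matrix

namespace MvPolynomial

variable {R σ τ : Type*}

theorem pderiv_bind₁ [CommSemiring R] [Fintype τ] (φ : τ → MvPolynomial σ R)
    (f : MvPolynomial τ R) (i : σ) :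
    pderiv i (bind₁ φ f) = ∑ j, bind₁ φ (pderiv j f) * pderiv i (φ j) := by
  classical
  induction f using MvPolynomial.induction_on with
  | C a => simp
  | add p q hp hq => simp only [map_add, hp, hq, add_mul, Finset.sum_add_distrib]
  | mul_X p k hp =>
    simp only [map_mul, bind₁_X_right, pderiv_mul, hp, pderiv_X, Pi.single_apply, mul_ite,
      mul_one, mul_zero, map_add, apply_ite (bind₁ φ), map_zero, add_mul, ite_mul, zero_mul,
      Finset.sum_add_distrib, Finset.sum_ite_eq, Finset.mem_univ, if_true, Finset.sum_mul]
    ac_rfl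

theorem pderiv_sum_C_mul_X [CommSemiring R] [Fintype σ] (a : σ → R) (i : σ) :
    pderiv i (∑ k, C (a k) * X k) = C (a i) := by
  classical
  simp [pderiv_X, Pi.single_apply]

theorem eval_bind₁_sum_C_mul_X [CommSemiring R] [Fintype σ] (A : Matrix σ σ R)
    (f : MvPolynomial σ R) (w : σ → R) :
    eval w (bind₁ (fun j => ∑ k, C (A j k) * X k) f) = eval (A *ᵥ w) f := by
  rw [show eval w = eval₂Hom (RingHom.id R) w from rfl, eval₂Hom_bind₁]
  congr
  funext j
  simp [mulVec, dotProduct]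

def evalGradient [CommSemiring R] (F : MvPolynomial σ R) (w : σ → R) : σ → R :=
  fun i => eval w (pderiv i F)

theorem evalGradient_eq_vecMul_of_eval_mulVec [CommRing R] [IsDomain R] [Infinite R] [Fintype σ]
    {A : Matrix σ σ R} {F : MvPolynomial σ R} (hF : ∀ w, eval (A *ᵥ w) F = eval w F)
    (w : σ → R) : evalGradient F w = evalGradient F (A *ᵥ w) ᵥ* A := by
  set φ : σ → MvPolynomial σ R := fun j => ∑ k, C (A j k) * X k
  have hφ_eval (g : MvPolynomial σ R) (u : σ → R) : eval u (bind₁ φ g) = eval (A *ᵥ u) g :=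
    eval_bind₁_sum_C_mul_X A g u
  have hbind : bind₁ φ F = F := MvPolynomial.funext fun u => by rw [hφ_eval, hF]
  funext i
  have hφ_pderiv (j : σ) : pderiv i (φ j) = C (A j i) := pderiv_sum_C_mul_X (A j) i
  conv_lhs => rw [evalGradient, ← hbind, pderiv_bind₁]
  simp only [hφ_pderiv, map_sum, map_mul, hφ_eval, eval_C, vecMul, dotProduct,
    evalGradient]

theorem IsHomogeneous.evalGradient_dotProduct [CommSemiring R] [Fintype σ] {F : MvPolynomial σ R}
    {n : ℕ} (hF : F.IsHomogeneous n) (w : σ → R) : evalGradient F w ⬝ᵥ w = n * eval w F := by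
  have := congrArg (eval w) hF.sum_X_mul_pderiv
  simp only [map_sum, map_mul, eval_X, nsmul_eq_mul, map_natCast] at this
  simp only [evalGradient, dotProduct, mul_comm _ (w _), this]

end MvPolynomial

theorem sum_mulVec_mem_fixedSpace {n : ℕ} (H : Subgroup (GL (Fin n) ℂ)) [Fintype H]
    (w : Fin n → ℂ) :
    ∑ h : H, ((h : GL (Fin n) ℂ) : Matrix (Fin n) (Fin n) ℂ) *ᵥ w ∈
      fixedSpace (H : Set (GL (Fin n) ℂ)) := by
  intro g hg
  simp only [mulVec_sum, mulVec_mulVec]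
  exact Fintype.sum_equiv (Equiv.mulLeft (⟨g, hg⟩ : H)) _ _ fun h => rfl

theorem eq_zero_of_vecMul_eq_self_of_dotProduct_fixedSpace {n : ℕ} (H : Subgroup (GL (Fin n) ℂ))
    [Finite H] {d : Fin n → ℂ} (hd : ∀ h ∈ H, d ᵥ* (h : Matrix (Fin n) (Fin n) ℂ) = d)
    (hfix : ∀ u ∈ fixedSpace (H : Set (GL (Fin n) ℂ)), d ⬝ᵥ u = 0) : d = 0 := by
  have := Fintype.ofFinite H
  have hdw (w : Fin n → ℂ) : d ⬝ᵥ w = 0 := by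
    have hsum := hfix _ (sum_mulVec_mem_fixedSpace H w)
    simp only [dotProduct_sum, dotProduct_mulVec, fun h : H => hd h h.2, Finset.sum_const,
      Finset.card_univ] at hsum
    exact (smul_eq_zero.mp hsum).resolve_left Fintype.card_ne_zero
  funext i
  simpa using hdw (Pi.single i 1)

theorem evalGradient_eq_zero_of_mem_fixedSpace {n e : ℕ} (H : Subgroup (GL (Fin n) ℂ)) [Finite H]
    (hdim : Module.finrank ℂ (fixedSpace (H : Set (GL (Fin n) ℂ))) = 1)
    {v : Fin n → ℂ} (hv : v ∈ fixedSpace (H : Set (GL (Fin n) ℂ))) (hv0 : v ≠ 0)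
    {F : MvPolynomial (Fin n) ℂ} (hF : F.IsHomogeneous e)
    (hinv : ∀ h ∈ H, ∀ w, eval ((h : Matrix (Fin n) (Fin n) ℂ) *ᵥ w) F = eval w F)
    (hFv : eval v F = 0) : evalGradient F v = 0 := by
  refine eq_zero_of_vecMul_eq_self_of_dotProduct_fixedSpace H (fun h hh => ?_) fun u hu => ?_
  · have hgrad := evalGradient_eq_vecMul_of_eval_mulVec (hinv h hh) v
    rw [hv h hh] at hgrad
    exact hgrad.symm
  · obtain ⟨c, hc⟩ := (finrank_eq_one_iff_of_nonzero' (⟨v, hv⟩ : fixedSpace _)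
      (by simpa using hv0)).mp hdim ⟨u, hu⟩
    rw [← show c • v = u from congrArg Subtype.val hc, dotProduct_smul,
      hF.evalGradient_dotProduct, hFv, mul_zero, smul_zero]

theorem stmt_3 {n e : ℕ} (G H : Subgroup (GL (Fin n) ℂ)) (hG : Finite G) (hHG : H ≤ G)
    (hdim : Module.finrank ℂ (fixedSpace (H : Set (GL (Fin n) ℂ))) = 1)
    (v : Fin n → ℂ) (hv : v ∈ fixedSpace (H : Set (GL (Fin n) ℂ))) (hv0 : v ≠ 0)
    (f₁ f₂ : MvPolynomial (Fin n) ℂ)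
    (hhom₁ : f₁.IsHomogeneous e) (hhom₂ : f₂.IsHomogeneous e)
    (hinv₁ : ∀ g ∈ G, ∀ w : Fin n → ℂ,
      MvPolynomial.eval ((g : Matrix (Fin n) (Fin n) ℂ).mulVec w) f₁ = MvPolynomial.eval w f₁)
    (hinv₂ : ∀ g ∈ G, ∀ w : Fin n → ℂ,
      MvPolynomial.eval ((g : Matrix (Fin n) (Fin n) ℂ).mulVec w) f₂ = MvPolynomial.eval w f₂)
    (hf₁v : MvPolynomial.eval v f₁ ≠ 0) :
    ∀ g ∈ G, ∀ i,
      MvPolynomial.eval ((g : Matrix (Fin n) (Fin n) ℂ).mulVec v)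
        (pderiv i (f₂ - (MvPolynomial.eval v f₂ / MvPolynomial.eval v f₁) • f₁)) = 0 := by
  intro g hg i
  have : Finite H := Finite.of_injective _ (Subgroup.inclusion_injective hHG)
  set F := f₂ - (eval v f₂ / eval v f₁) • f₁
  have hFinv : ∀ g ∈ G, ∀ w, eval ((g : Matrix (Fin n) (Fin n) ℂ) *ᵥ w) F = eval w F := by
    intro g hg w
    simp only [F, map_sub, smul_eq_C_mul, map_mul, eval_C, hinv₁ g hg w, hinv₂ g hg w]
  have hFhom : F.IsHomogeneous e := by
    simpa only [F, smul_eq_C_mul] using hhom₂.sub (hhom₁.C_mul _)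
  have hFv : eval v F = 0 := by
    simp only [F, map_sub, smul_eq_C_mul, map_mul, eval_C, div_mul_cancel₀ _ hf₁v, sub_self]
  have hgrad_v := evalGradient_eq_zero_of_mem_fixedSpace H hdim hv hv0 hFhom
    (fun h hh => hFinv h (hHG hh)) hFv
  have hgrad_gv := evalGradient_eq_vecMul_of_eval_mulVec (hFinv g⁻¹ (G.inv_mem hg))
    ((g : Matrix (Fin n) (Fin n) ℂ) *ᵥ v)
  rw [mulVec_mulVec, ← Units.val_mul, inv_mul_cancel, Units.val_one, one_mulVec, hgrad_v,
    zero_vecMul] at hgrad_gv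
  exact congrFun hgrad_gv i
end
end

section
/- Let G be a finite subgroup of GL(V) and let H be a subgroup of G with dim V^H = 1 that is maximal among the subgroups K of G satisfying dim V^K = 1 (i.e. if H ⊆ K ⊆ G and dim V^K = 1 then K = H). Let v be a nonzero vector of V^H. Then the stabilizer in G of the line ℂ·v equals the normalizer N_G(H), and consequently the G-orbit of the line ℂ·v in projective space has cardinality |G|/|N_G(H)|. -/
noncomputable section
open MvPolynomial Matrix

/-!
If `g ∈ G` maps the line `ℂ v = V^H` to itself, then `V^(gHg⁻¹) = g • V^H = V^H`, so the subgroup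
`K = H ⊔ gHg⁻¹ ≤ G` has the same one-dimensional fixed space as `H`; maximality forces `K = H`,
i.e. `gHg⁻¹ ≤ H`, and the same for `g⁻¹` puts `g` in `N_G(H)`. Conversely `N_G(H)` permutes
`V^H = ℂ v`. The count is orbit–stabilizer for the action of `G` on subspaces.
-/

open Pointwise Submodule

-- `GL n R = (Matrix n n R)ˣ` acts on submodules through `Units.instSMul`, not through the pointwise
-- action of a group, so the `Submodule.Pointwise` lemmas are restated for units.
section UnitsPointwise

variable {M R V : Type*} [Monoid M] [Semiring R] [AddCommMonoid V] [Module R V]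
  [DistribMulAction M V] [SMulCommClass M R V]

theorem Units.smul_span_singleton (u : Mˣ) (v : V) : u • (R ∙ v) = R ∙ (u • v) := by
  rw [Units.smul_def, smul_span, Set.smul_set_singleton, Units.smul_def]

theorem Units.mem_smul_submodule_iff {u : Mˣ} {p : Submodule R V} {v : V} :
    v ∈ u • p ↔ u⁻¹ • v ∈ p := by
  rw [Units.smul_def, mem_smul_pointwise_iff_exists]
  constructor
  · rintro ⟨w, hw, rfl⟩
    rwa [← Units.smul_def, inv_smul_smul]
  · exact fun h => ⟨u⁻¹ • v, h, by rw [← Units.smul_def, smul_inv_smul]⟩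

end UnitsPointwise

theorem Units.smul_span_singleton_eq_self_iff {M K V : Type*} [Monoid M] [DivisionRing K]
    [AddCommMonoid V] [Module K V] [DistribMulAction M V] [SMulCommClass M K V]
    (u : Mˣ) (v : V) : u • (K ∙ v) = K ∙ v ↔ ∃ c : K, u • v = c • v := by
  rw [Units.smul_span_singleton]
  constructor
  · intro h
    obtain ⟨c, hc⟩ := mem_span_singleton.1 (h ▸ mem_span_singleton_self (u • v))
    exact ⟨c, hc.symm⟩
  · rintro ⟨c, hc⟩
    rcases eq_or_ne c 0 with rfl | hc0
    · rw [zero_smul, smul_eq_zero_iff_eq] at hc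
      simp [hc]
    · rw [hc, span_singleton_smul_eq hc0.isUnit]

theorem Subgroup.mem_normalizer_of_map_conj_le {G : Type*} [Group G] {H : Subgroup G} {g : G}
    (h₁ : H.map (MulAut.conj g) ≤ H) (h₂ : H.map (MulAut.conj g⁻¹) ≤ H) :
    g ∈ normalizer H := by
  refine mem_normalizer_iff.2 fun h => ⟨fun hh => h₁ ⟨h, hh, rfl⟩, fun hh => ?_⟩
  simpa [mul_assoc] using h₂ ⟨_, hh, rfl⟩

theorem Subgroup.map_conj_le_of_mem {G : Type*} [Group G] {H K : Subgroup G} {g : G}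
    (hHK : H ≤ K) (hg : g ∈ K) : H.map (MulAut.conj g) ≤ K :=
  (map_mono hHK).trans (mem_normalizer_iff_map_conj_eq.1 (le_normalizer hg)).le

theorem MulAction.card_stabilizer_eq_of_forall_mem_iff {α X : Type*} [Group α] [MulAction α X]
    {G : Subgroup α} {x : X} {P : α → Prop} (hP : ∀ g ∈ G, g • x = x ↔ P g) :
    Nat.card (stabilizer G x) = Nat.card {g | g ∈ G ∧ P g} := by
  have himage : {g | g ∈ G ∧ P g} = Subtype.val '' (stabilizer G x : Set G) := by
    ext g
    constructor
    · rintro ⟨hg, hPg⟩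
      exact ⟨⟨g, hg⟩, (hP g hg).2 hPg, rfl⟩
    · rintro ⟨⟨g, hg⟩, hgx, rfl⟩
      exact ⟨hg, (hP g hg).1 hgx⟩
  rw [himage]
  exact (Nat.card_image_of_injective Subtype.val_injective _).symm

section fixedSpace

variable {n : ℕ}

theorem mem_fixedSpace_iff_le_stabilizer {H : Subgroup (GL (Fin n) ℂ)} {v : Fin n → ℂ} :
    v ∈ fixedSpace (H : Set (GL (Fin n) ℂ)) ↔ H ≤ MulAction.stabilizer _ v :=
  Iff.rfl

theorem fixedSpace_sup (H K : Subgroup (GL (Fin n) ℂ)) :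
    fixedSpace ((H ⊔ K : Subgroup (GL (Fin n) ℂ)) : Set (GL (Fin n) ℂ)) =
      fixedSpace (H : Set (GL (Fin n) ℂ)) ⊓ fixedSpace (K : Set (GL (Fin n) ℂ)) := by
  ext v
  simp only [mem_inf, mem_fixedSpace_iff_le_stabilizer, sup_le_iff]

theorem smul_fixedSpace (g : GL (Fin n) ℂ) (H : Subgroup (GL (Fin n) ℂ)) :
    g • fixedSpace (H : Set (GL (Fin n) ℂ)) =
      fixedSpace ((H.map (MulAut.conj g) : Subgroup (GL (Fin n) ℂ)) : Set (GL (Fin n) ℂ)) := by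
  ext v
  have hstab := MulAction.stabilizer_smul_eq_stabilizer_map_conj g (g⁻¹ • v)
  rw [smul_inv_smul, MulEquiv.toMonoidHom_eq_coe] at hstab
  rw [Units.mem_smul_submodule_iff, mem_fixedSpace_iff_le_stabilizer,
    mem_fixedSpace_iff_le_stabilizer, hstab,
    Subgroup.map_le_map_iff_of_injective (MulAut.conj g).injective]

theorem map_conj_le_of_smul_fixedSpace_eq {G H : Subgroup (GL (Fin n) ℂ)} (hHG : H ≤ G)
    (hdim : Module.finrank ℂ (fixedSpace (H : Set (GL (Fin n) ℂ))) = 1)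
    (hmax : ∀ K : Subgroup (GL (Fin n) ℂ), H ≤ K → K ≤ G →
      Module.finrank ℂ (fixedSpace (K : Set (GL (Fin n) ℂ))) = 1 → K = H)
    {g : GL (Fin n) ℂ} (hg : g ∈ G)
    (hgH : g • fixedSpace (H : Set (GL (Fin n) ℂ)) = fixedSpace (H : Set (GL (Fin n) ℂ))) :
    H.map (MulAut.conj g) ≤ H := by
  have hKG : H ⊔ H.map (MulAut.conj g) ≤ G := sup_le hHG (Subgroup.map_conj_le_of_mem hHG hg)
  have hK : fixedSpace ((H ⊔ H.map (MulAut.conj g) : Subgroup (GL (Fin n) ℂ)) :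
      Set (GL (Fin n) ℂ)) = fixedSpace (H : Set (GL (Fin n) ℂ)) := by
    rw [fixedSpace_sup, ← smul_fixedSpace, hgH, inf_idem]
  exact le_sup_right.trans_eq (hmax _ le_sup_left hKG (hK ▸ hdim))

theorem smul_fixedSpace_eq_self_iff {G H : Subgroup (GL (Fin n) ℂ)} (hHG : H ≤ G)
    (hdim : Module.finrank ℂ (fixedSpace (H : Set (GL (Fin n) ℂ))) = 1)
    (hmax : ∀ K : Subgroup (GL (Fin n) ℂ), H ≤ K → K ≤ G →
      Module.finrank ℂ (fixedSpace (K : Set (GL (Fin n) ℂ))) = 1 → K = H)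
    {g : GL (Fin n) ℂ} (hg : g ∈ G) :
    g • fixedSpace (H : Set (GL (Fin n) ℂ)) = fixedSpace (H : Set (GL (Fin n) ℂ)) ↔
      g ∈ Subgroup.normalizer (H : Set (GL (Fin n) ℂ)) := by
  refine ⟨fun hgH => Subgroup.mem_normalizer_of_map_conj_le ?_ ?_, fun hN => ?_⟩
  · exact map_conj_le_of_smul_fixedSpace_eq hHG hdim hmax hg hgH
  · exact map_conj_le_of_smul_fixedSpace_eq hHG hdim hmax (inv_mem hg)
      (inv_smul_eq_iff.2 hgH.symm)
  · rw [smul_fixedSpace, Subgroup.mem_normalizer_iff_map_conj_eq.1 hN]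

end fixedSpace

theorem stmt_4_general {n : ℕ} (G H : Subgroup (GL (Fin n) ℂ)) (hHG : H ≤ G)
    (hdim : Module.finrank ℂ (fixedSpace (H : Set (GL (Fin n) ℂ))) = 1)
    (hmax : ∀ K : Subgroup (GL (Fin n) ℂ), H ≤ K → K ≤ G →
      Module.finrank ℂ (fixedSpace (K : Set (GL (Fin n) ℂ))) = 1 → K = H)
    (v : Fin n → ℂ) (hv : v ∈ fixedSpace (H : Set (GL (Fin n) ℂ))) (hv0 : v ≠ 0) :
    {g : GL (Fin n) ℂ | g ∈ G ∧ ∃ c : ℂ, (g : Matrix (Fin n) (Fin n) ℂ).mulVec v = c • v}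
      = {g : GL (Fin n) ℂ | g ∈ G ∧ g ∈ Subgroup.normalizer (H : Set (GL (Fin n) ℂ))} ∧
    Nat.card {L : Submodule ℂ (Fin n → ℂ) |
        ∃ g ∈ G, L = Submodule.span ℂ {(g : Matrix (Fin n) (Fin n) ℂ).mulVec v}}
      * Nat.card {g : GL (Fin n) ℂ | g ∈ G ∧ g ∈ Subgroup.normalizer (H : Set (GL (Fin n) ℂ))} = Nat.card G := by
  have hline : fixedSpace (H : Set (GL (Fin n) ℂ)) = ℂ ∙ v :=
    eq_span_singleton_of_mem_of_finrank_eq_one hdim hv hv0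
  have hstab : ∀ g ∈ G, g • (ℂ ∙ v) = ℂ ∙ v ↔ g ∈ Subgroup.normalizer (H : Set (GL (Fin n) ℂ)) :=
    fun g hg => hline ▸ smul_fixedSpace_eq_self_iff hHG hdim hmax hg
  refine ⟨Set.ext fun g => and_congr_right fun hg => ?_, ?_⟩
  · rw [← hstab g hg, Units.smul_span_singleton_eq_self_iff, Units.smul_def, Matrix.smul_eq_mulVec]
  · have horbit : {L : Submodule ℂ (Fin n → ℂ) |
        ∃ g ∈ G, L = Submodule.span ℂ {(g : Matrix (Fin n) (Fin n) ℂ).mulVec v}} =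
        MulAction.orbit G (ℂ ∙ v) := by
      ext L
      simp only [Set.mem_ofPred_eq, MulAction.mem_orbit_iff, Subtype.exists, Subgroup.mk_smul,
        Units.smul_span_singleton, exists_prop]
      simp only [Units.smul_def, Matrix.smul_eq_mulVec, eq_comm (a := L)]
    rw [horbit, ← MulAction.card_stabilizer_eq_of_forall_mem_iff hstab, Nat.card_coe_set_eq,
      ← MulAction.index_stabilizer, Subgroup.index_mul_card]

theorem stmt_4 {n : ℕ} (G H : Subgroup (GL (Fin n) ℂ)) (hG : Finite G) (hHG : H ≤ G)
    (hdim : Module.finrank ℂ (fixedSpace (H : Set (GL (Fin n) ℂ))) = 1)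
    (hmax : ∀ K : Subgroup (GL (Fin n) ℂ), H ≤ K → K ≤ G →
      Module.finrank ℂ (fixedSpace (K : Set (GL (Fin n) ℂ))) = 1 → K = H)
    (v : Fin n → ℂ) (hv : v ∈ fixedSpace (H : Set (GL (Fin n) ℂ))) (hv0 : v ≠ 0) :
    {g : GL (Fin n) ℂ | g ∈ G ∧ ∃ c : ℂ, (g : Matrix (Fin n) (Fin n) ℂ).mulVec v = c • v}
      = {g : GL (Fin n) ℂ | g ∈ G ∧ g ∈ Subgroup.normalizer (H : Set (GL (Fin n) ℂ))} ∧
    Nat.card {L : Submodule ℂ (Fin n → ℂ) |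
        ∃ g ∈ G, L = Submodule.span ℂ {(g : Matrix (Fin n) (Fin n) ℂ).mulVec v}}
      * Nat.card {g : GL (Fin n) ℂ | g ∈ G ∧ g ∈ Subgroup.normalizer (H : Set (GL (Fin n) ℂ))} = Nat.card G :=
  stmt_4_general G H hHG hdim hmax v hv hv0
end
end

section
/- Let G be a finite subgroup of GL(V) with dim V^G = 2, let f be a nonzero homogeneous G-invariant polynomial function on V, and let v ∈ V^G be a nonzero vector with f(v) = 0. Assume that v is a smooth point of the hypersurface Z(f), i.e. some partial derivative of f is nonzero at v. Then the line ℙ(V^G) meets Z(f) transversally at [v]: there exists u ∈ V^G with ∂_u f(v) ≠ 0. -/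
/-!
Averaging over `G`. The coefficient of `t` in `f(v + t w)` is `∂_w f(v)`; since each `g ∈ G`
fixes `v` and `f`, the polynomials `f(v + t g w)` and `f(v + t w)` agree, so `w ↦ ∂_w f(v)` is a
`G`-invariant linear form. Such a form takes the same value at `w` and at the Reynolds average of
`w`, which lies in `V^G`; take for `w` a coordinate vector with `∂f/∂xᵢ(v) ≠ 0`.
-/

noncomputable section
open MvPolynomial Matrix

namespace Representation

variable {k G V W : Type*} [CommRing k] [Group G] [Fintype G] [Invertible (Fintype.card G : k)]
  [AddCommGroup V] [Module k V] [AddCommGroup W] [Module k W] (ρ : Representation k G V)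

theorem comp_averageMap_of_forall_comp_eq {L : V →ₗ[k] W} (hL : ∀ g, L ∘ₗ ρ g = L) :
    L ∘ₗ ρ.averageMap = L := by
  ext x
  have hLx (g : G) : L (ρ g x) = L x := LinearMap.congr_fun (hL g) x
  simp [GroupAlgebra.average, map_sum, hLx, Finset.card_univ, ← Nat.cast_smul_eq_nsmul k,
    smul_smul]

theorem exists_mem_invariants_apply_ne_zero {L : V →ₗ[k] W} (hL : ∀ g, L ∘ₗ ρ g = L) {x : V}
    (hx : L x ≠ 0) : ∃ u ∈ ρ.invariants, L u ≠ 0 :=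
  ⟨ρ.averageMap x, ρ.averageMap_invariant x, by
    rwa [← LinearMap.comp_apply, ρ.comp_averageMap_of_forall_comp_eq hL]⟩

end Representation

namespace MvPolynomial

variable {R σ : Type*} [CommRing R]

def lineRestriction (v w : σ → R) : MvPolynomial σ R →ₐ[R] Polynomial R :=
  aeval fun i => Polynomial.C (v i) + Polynomial.C (w i) * Polynomial.X

theorem eval_lineRestriction (f : MvPolynomial σ R) (v w : σ → R) (t : R) :
    (lineRestriction v w f).eval t = eval (v + t • w) f := by
  rw [← Polynomial.coe_aeval_eq_eval, lineRestriction, ← AlgHom.comp_apply, comp_aeval,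
    ← coe_aeval_eq_eval]
  refine congrArg (aeval · f) ?_
  ext i
  simpa using mul_comm (w i) t

theorem coeff_zero_lineRestriction (f : MvPolynomial σ R) (v w : σ → R) :
    (lineRestriction v w f).coeff 0 = eval v f := by
  simp [Polynomial.coeff_zero_eq_eval_zero, eval_lineRestriction]

theorem coeff_one_lineRestriction [Fintype σ] (f : MvPolynomial σ R) (v w : σ → R) :
    (lineRestriction v w f).coeff 1 = ∑ i, w i * eval v (pderiv i f) := by
  classical
  induction f using MvPolynomial.induction_on with
  | C a => simp [lineRestriction]
  | add p q hp hq => simp [hp, hq, Finset.sum_add_distrib, mul_add]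
  | mul_X p j hp =>
    have hlin : lineRestriction v w (p * X j) = lineRestriction v w p * Polynomial.C (v j)
        + lineRestriction v w p * Polynomial.C (w j) * Polynomial.X := by
      simp [lineRestriction, mul_add, mul_assoc]
    rw [hlin, Polynomial.coeff_add, Polynomial.coeff_mul_C, Polynomial.coeff_mul_X,
      Polynomial.coeff_mul_C, hp, coeff_zero_lineRestriction]
    simp only [add_comm, Derivation.leibniz, pderiv_X, Pi.single_apply, apply_ite, smul_eq_mul,
      mul_one, mul_zero, map_add, map_zero, map_mul, eval_X, mul_add, Finset.sum_add_distrib,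
      Finset.sum_ite_eq, Finset.mem_univ, ↓reduceIte]
    rw [Finset.sum_mul]
    exact congrArg₂ (· + ·) (mul_comm _ _) (Finset.sum_congr rfl fun _ _ => by ring)

theorem sum_mulVec_mul_eval_pderiv_of_invariant [Fintype σ] [DecidableEq σ] [IsDomain R]
    [Infinite R] {f : MvPolynomial σ R} {M : Matrix σ σ R} (hMf : ∀ x, eval (M *ᵥ x) f = eval x f)
    {v : σ → R} (hMv : M *ᵥ v = v) (w : σ → R) :
    ∑ i, (M *ᵥ w) i * eval v (pderiv i f) = ∑ i, w i * eval v (pderiv i f) := by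
  simp only [← coeff_one_lineRestriction]
  congr 1
  refine Polynomial.funext fun t => ?_
  rw [eval_lineRestriction, eval_lineRestriction, ← hMf (v + t • w), mulVec_add, mulVec_smul,
    hMv]

end MvPolynomial

def Subgroup.matrixRepresentation {n : ℕ} (G : Subgroup (GL (Fin n) ℂ)) :
    Representation ℂ G (Fin n → ℂ) :=
  Matrix.toLinAlgEquiv'.toMonoidHom.comp ((Units.coeHom _).comp G.subtype)

theorem fixedSpace_eq_invariants {n : ℕ} (G : Subgroup (GL (Fin n) ℂ)) :
    fixedSpace (G : Set (GL (Fin n) ℂ)) = G.matrixRepresentation.invariants := by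
  ext v
  simp [fixedSpace, Representation.mem_invariants, Subgroup.matrixRepresentation]

theorem stmt_5_general {n : ℕ} (G : Subgroup (GL (Fin n) ℂ)) (hG : Finite G)
    (f : MvPolynomial (Fin n) ℂ)
    (hinv : ∀ g ∈ G, ∀ w : Fin n → ℂ,
      MvPolynomial.eval ((g : Matrix (Fin n) (Fin n) ℂ).mulVec w) f = MvPolynomial.eval w f)
    (v : Fin n → ℂ) (hv : v ∈ fixedSpace (G : Set (GL (Fin n) ℂ)))
    (hsmooth : ∃ i, MvPolynomial.eval v (pderiv i f) ≠ 0) :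
    ∃ u ∈ fixedSpace (G : Set (GL (Fin n) ℂ)),
      ∑ i, u i * MvPolynomial.eval v (pderiv i f) ≠ 0 := by
  have := Fintype.ofFinite G
  have : Invertible (Fintype.card G : ℂ) :=
    invertibleOfNonzero (Nat.cast_ne_zero.2 Fintype.card_ne_zero)
  obtain ⟨i, hi⟩ := hsmooth
  set L := Fintype.linearCombination ℂ fun i => eval v (pderiv i f)
  have hL : ∀ g, L ∘ₗ G.matrixRepresentation g = L := fun g => LinearMap.ext fun w => by
    simpa [L, Fintype.linearCombination_apply, Subgroup.matrixRepresentation] using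
      sum_mulVec_mul_eval_pderiv_of_invariant (hinv g g.2) (hv g g.2) w
  obtain ⟨u, hu, hLu⟩ := G.matrixRepresentation.exists_mem_invariants_apply_ne_zero hL
    (x := Pi.single i 1) (by simpa [L, Fintype.linearCombination_apply, Pi.single_apply] using hi)
  exact ⟨u, fixedSpace_eq_invariants G ▸ hu,
    by simpa [L, Fintype.linearCombination_apply] using hLu⟩

theorem stmt_5 {n e : ℕ} (G : Subgroup (GL (Fin n) ℂ)) (hG : Finite G)
    (hdim : Module.finrank ℂ (fixedSpace (G : Set (GL (Fin n) ℂ))) = 2)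
    (f : MvPolynomial (Fin n) ℂ) (hf0 : f ≠ 0) (hhom : f.IsHomogeneous e)
    (hinv : ∀ g ∈ G, ∀ w : Fin n → ℂ,
      MvPolynomial.eval ((g : Matrix (Fin n) (Fin n) ℂ).mulVec w) f = MvPolynomial.eval w f)
    (v : Fin n → ℂ) (hv : v ∈ fixedSpace (G : Set (GL (Fin n) ℂ))) (hv0 : v ≠ 0)
    (hfv : MvPolynomial.eval v f = 0)
    (hsmooth : ∃ i, MvPolynomial.eval v (pderiv i f) ≠ 0) :
    ∃ u ∈ fixedSpace (G : Set (GL (Fin n) ℂ)),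
      ∑ i, u i * MvPolynomial.eval v (pderiv i f) ≠ 0 :=
  stmt_5_general G hG f hinv v hv hsmooth
end
end

section
/- Let w be an invertible linear endomorphism of a finite-dimensional complex vector space V, let ζ, μ ∈ ℂ and v, u ∈ V with w(v) = ζ·v and w(u) = μ·u, and let f be a w-invariant polynomial function on V, homogeneous of degree d. If μ ≠ ζ^{1−d} (i.e. μ·ζ^d ≠ ζ), then the directional derivative of f along u vanishes at v: ∂_u f(v) = 0. -/
noncomputable section
open MvPolynomial Matrix

private lemma eval_bind₁' {n : ℕ} (v : Fin n → ℂ) (s : Fin n → MvPolynomial (Fin n) ℂ)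
    (p : MvPolynomial (Fin n) ℂ) :
    MvPolynomial.eval v (MvPolynomial.bind₁ s p)
      = MvPolynomial.eval (fun i => MvPolynomial.eval v (s i)) p := by
  simp only [MvPolynomial.eval, MvPolynomial.eval₂Hom_bind₁]

private lemma chain_rule {n : ℕ} (v u : Fin n → ℂ) (s : Fin n → MvPolynomial (Fin n) ℂ)
    (p : MvPolynomial (Fin n) ℂ) :
    ∑ k, u k * MvPolynomial.eval v (pderiv k (MvPolynomial.bind₁ s p))
      = ∑ j, (∑ k, u k * MvPolynomial.eval v (pderiv k (s j)))
          * MvPolynomial.eval (fun i => MvPolynomial.eval v (s i)) (pderiv j p) := by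
  induction p using MvPolynomial.induction_on with
  | C a => simp
  | add p q hp hq =>
      simp only [map_add, mul_add, Finset.sum_add_distrib, hp, hq]
  | mul_X p i hp =>
      classical
      have hbind : MvPolynomial.bind₁ s (p * X i) = MvPolynomial.bind₁ s p * s i := by
        rw [_root_.map_mul, bind₁_X_right]
      rw [hbind]
      have hLHS : ∑ k, u k * MvPolynomial.eval v (pderiv k (MvPolynomial.bind₁ s p * s i))
          = (∑ k, u k * MvPolynomial.eval v (pderiv k (MvPolynomial.bind₁ s p)))
              * MvPolynomial.eval v (s i)
            + MvPolynomial.eval v (MvPolynomial.bind₁ s p)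
              * ∑ k, u k * MvPolynomial.eval v (pderiv k (s i)) := by
        simp only [pderiv_mul, map_add, eval_mul]
        rw [Finset.sum_mul, Finset.mul_sum, ← Finset.sum_add_distrib]
        exact Finset.sum_congr rfl fun k _ => by ring
      have hδ : ∀ j : Fin n, MvPolynomial.eval (fun i => MvPolynomial.eval v (s i))
          (pderiv j (X i : MvPolynomial (Fin n) ℂ)) = if j = i then 1 else 0 := by
        intro j
        by_cases h : j = i
        · subst h; simp
        · rw [pderiv_X_of_ne fun hh => h hh.symm]; simp [h]
      have hRHS : ∑ j, (∑ k, u k * MvPolynomial.eval v (pderiv k (s j)))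
            * MvPolynomial.eval (fun i => MvPolynomial.eval v (s i)) (pderiv j (p * X i))
          = (∑ j, (∑ k, u k * MvPolynomial.eval v (pderiv k (s j)))
                * MvPolynomial.eval (fun i => MvPolynomial.eval v (s i)) (pderiv j p))
              * MvPolynomial.eval v (s i)
            + MvPolynomial.eval (fun i => MvPolynomial.eval v (s i)) p
              * ∑ k, u k * MvPolynomial.eval v (pderiv k (s i)) := by
        have hXi : MvPolynomial.eval (fun i => MvPolynomial.eval v (s i))
            (X i : MvPolynomial (Fin n) ℂ) = MvPolynomial.eval v (s i) := by simp
        simp only [pderiv_mul, map_add, _root_.map_mul, hXi, hδ, mul_add, mul_ite, mul_one,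
          mul_zero, Finset.sum_add_distrib]
        congr 1
        · rw [Finset.sum_mul]
          exact Finset.sum_congr rfl fun j _ => by ring
        · rw [Finset.sum_ite_eq' Finset.univ i
            (fun j => (∑ k, u k * MvPolynomial.eval v (pderiv k (s j)))
              * MvPolynomial.eval (fun i => MvPolynomial.eval v (s i)) p)]
          simp [mul_comm]
      rw [hLHS, hRHS, hp]
      rw [eval_bind₁']

private lemma eval_smul_homog {n d : ℕ} {f : MvPolynomial (Fin n) ℂ} (hf : f.IsHomogeneous d)
    (c : ℂ) (x : Fin n → ℂ) :
    MvPolynomial.eval (c • x) f = c ^ d * MvPolynomial.eval x f := by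
  rw [MvPolynomial.eval_eq, MvPolynomial.eval_eq, Finset.mul_sum]
  refine Finset.sum_congr rfl fun m hm => ?_
  have hdeg : ∑ i ∈ m.support, m i = d := by
    have h := hf (MvPolynomial.mem_support_iff.mp hm)
    simpa [Finsupp.weight_apply, Finsupp.sum, mul_comm] using h
  have : ∏ i ∈ m.support, (c • x) i ^ m i
      = c ^ d * ∏ i ∈ m.support, x i ^ m i := by
    simp only [Pi.smul_apply, smul_eq_mul, mul_pow]
    rw [Finset.prod_mul_distrib, Finset.prod_pow_eq_pow_sum, hdeg]
  rw [this]; ring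

theorem stmt_8 {n d : ℕ} (w : GL (Fin n) ℂ) (ζ μ : ℂ) (v u : Fin n → ℂ)
    (hv : (w : Matrix (Fin n) (Fin n) ℂ).mulVec v = ζ • v)
    (hu : (w : Matrix (Fin n) (Fin n) ℂ).mulVec u = μ • u)
    (f : MvPolynomial (Fin n) ℂ)
    (hinv : ∀ x : Fin n → ℂ,
      MvPolynomial.eval ((w : Matrix (Fin n) (Fin n) ℂ).mulVec x) f = MvPolynomial.eval x f)
    (hhom : f.IsHomogeneous d)
    (hμζ : μ * ζ ^ d ≠ ζ) :
    ∑ i, u i * MvPolynomial.eval v (pderiv i f) = 0 := by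
  classical
  set W : Matrix (Fin n) (Fin n) ℂ := (w : Matrix (Fin n) (Fin n) ℂ) with hW
  set S : ℂ := ∑ i, u i * MvPolynomial.eval v (pderiv i f) with hS
  set T : ℂ := ∑ i, u i * MvPolynomial.eval (ζ • v) (pderiv i f) with hT
  -- substitution for w
  set sW : Fin n → MvPolynomial (Fin n) ℂ := fun j => ∑ k, C (W j k) * X k with hsW
  have heval_sW : ∀ (x : Fin n → ℂ) j, MvPolynomial.eval x (sW j) = W.mulVec x j := by
    intro x j
    simp [hsW, Matrix.mulVec, dotProduct]
  have hpd_sW : ∀ j k, pderiv k (sW j) = C (W j k) := by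
    intro j k
    simp only [hsW, map_sum]
    rw [Finset.sum_eq_single k]
    · simp
    · intro b _ hb; rw [pderiv_C_mul, pderiv_X_of_ne hb, mul_zero]
    · simp
  have hbindW : MvPolynomial.bind₁ sW f = f := by
    apply MvPolynomial.funext
    intro x
    rw [eval_bind₁']
    have : (fun i => MvPolynomial.eval x (sW i)) = W.mulVec x := by
      funext i; exact heval_sW x i
    rw [this, hinv x]
  -- first identity : S = μ * T
  have h1 : S = μ * T := by
    have := chain_rule v u sW f
    rw [hbindW] at this
    have hv' : (fun i => MvPolynomial.eval v (sW i)) = ζ • v := by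
      funext i; rw [heval_sW v i, hv]
    rw [hv'] at this
    rw [hS, this, hT, Finset.mul_sum]
    refine Finset.sum_congr rfl fun j _ => ?_
    have : (∑ k, u k * MvPolynomial.eval v (pderiv k (sW j))) = μ * u j := by
      simp only [hpd_sW, eval_C]
      have : ∑ k, u k * W j k = W.mulVec u j := by
        simp [Matrix.mulVec, dotProduct, mul_comm]
      rw [this, hu]; simp
    rw [this]; ring
  -- scaling substitution
  set sc : Fin n → MvPolynomial (Fin n) ℂ := fun j => C ζ * X j with hsc
  have hbindc : MvPolynomial.bind₁ sc f = C (ζ ^ d) * f := by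
    apply MvPolynomial.funext
    intro x
    rw [eval_bind₁']
    have : (fun i => MvPolynomial.eval x (sc i)) = ζ • x := by
      funext i; simp [hsc]
    rw [this, eval_smul_homog hhom]
    simp
  -- second identity : ζ^d * S = ζ * T
  have h2 : ζ ^ d * S = ζ * T := by
    have := chain_rule v u sc f
    rw [hbindc] at this
    have hlhs : ∑ k, u k * MvPolynomial.eval v (pderiv k (C (ζ ^ d) * f)) = ζ ^ d * S := by
      rw [hS, Finset.mul_sum]
      refine Finset.sum_congr rfl fun k _ => ?_
      rw [pderiv_C_mul]; simp; ring
    rw [hlhs] at this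
    have hv' : (fun i => MvPolynomial.eval v (sc i)) = ζ • v := by
      funext i; simp [hsc]
    rw [hv'] at this
    rw [this, hT, Finset.mul_sum]
    refine Finset.sum_congr rfl fun j _ => ?_
    have : (∑ k, u k * MvPolynomial.eval v (pderiv k (sc j))) = ζ * u j := by
      have : ∀ k : Fin n, MvPolynomial.eval v (pderiv k (sc j))
          = if j = k then ζ else 0 := by
        intro k
        by_cases h : j = k
        · subst h; simp [hsc, pderiv_C_mul]
        · simp [hsc, pderiv_C_mul, pderiv_X_of_ne h, h]
      simp only [this, mul_ite, mul_zero, Finset.sum_ite_eq, Finset.mem_univ, if_true]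
      ring
    rw [this]; ring
  -- combine
  have h3 : (μ * ζ ^ d - ζ) * S = 0 := by
    have : μ * (ζ ^ d * S) = μ * (ζ * T) := by rw [h2]
    calc (μ * ζ ^ d - ζ) * S = μ * (ζ ^ d * S) - ζ * S := by ring
    _ = μ * (ζ * T) - ζ * S := by rw [this]
    _ = ζ * (μ * T) - ζ * S := by ring
    _ = ζ * S - ζ * S := by rw [← h1]
    _ = 0 := by ring
  rcases mul_eq_zero.mp h3 with h | h
  · exact absurd (sub_eq_zero.mp h) hμζ
  · exact h
end
end

section
/- Let e ≥ 1, let ζ ∈ ℂ be a primitive e-th root of unity, let n ≥ 1 and let d, d₁, …, dₙ be positive integers with e dividing d₁. Let w ∈ GLₙ(ℂ) be the diagonal matrix with entries ζ^{1−d₁}, …, ζ^{1−dₙ}, and let f ∈ ℂ[x₁,…,xₙ] be homogeneous of degree d, invariant under w, with f(e₁) = 0, where e₁ = (1,0,…,0). If d ≢ dₖ (mod e) for all k ∈ {2,…,n}, then all partial derivatives of f vanish at e₁; that is, the projective hypersurface Z(f) is singular at the point [e₁]. -/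
/-!
Invariance under the diagonal matrix `w = diag(c₁, …, cₙ)` kills every coefficient of `f` at a
monomial `x^m` with `c^m ≠ 1`. At `e₁` a homogeneous polynomial of degree `D` evaluates to its
`x₁^D`-coefficient, so `∂ᵢf(e₁)` is a multiple of the coefficient of `x₁^(d-1) xᵢ` in `f`.
For `i = 1` this is the coefficient of `x₁^d`, namely `f(e₁) = 0`; for `i ≠ 1` the monomial has
eigenvalue `ζ^(d-1) ζ^(1-dᵢ) = ζ^(d-dᵢ) ≠ 1`.
-/

open MvPolynomial Matrix

namespace MvPolynomial
variable {σ R : Type*}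

theorem coeff_bind₁_C_mul_X [CommSemiring R] (c : σ → R) (f : MvPolynomial σ R) (m : σ →₀ ℕ) :
    coeff m (bind₁ (fun j => C (c j) * X j) f) = (m.prod fun j k => c j ^ k) * coeff m f := by
  classical
  induction f using MvPolynomial.induction_on' with
  | add p q hp hq => simp only [map_add, coeff_add, hp, hq, mul_add]
  | monomial s a =>
    have hmonomial : bind₁ (fun j => C (c j) * X j) (monomial s a)
        = monomial s ((s.prod fun j k => c j ^ k) * a) := by
      rw [bind₁_monomial, monomial_eq, C_mul, Finsupp.prod, Finsupp.prod, map_prod]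
      simp only [mul_pow, Finset.prod_mul_distrib, map_pow]
      ring
    rw [hmonomial, coeff_monomial, coeff_monomial]
    split_ifs with h
    · rw [h]
    · rw [mul_zero]

theorem IsHomogeneous.eval_piSingle_one [CommSemiring R] [DecidableEq σ] {p : MvPolynomial σ R}
    {D : ℕ} (hp : p.IsHomogeneous D) (a : σ) :
    eval (Pi.single a 1) p = coeff (Finsupp.single a D) p := by
  rw [eval_eq, Finset.sum_eq_single (Finsupp.single a D)]
  · rw [Finset.prod_eq_one, mul_one]
    intro j hj
    rw [Finset.mem_singleton.1 (Finsupp.support_single_subset hj), Pi.single_eq_same, one_pow]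
  · intro m hm hne
    obtain ⟨j, hjm, hja⟩ : ∃ j ∈ m.support, j ≠ a := by
      by_contra! h
      have hma : m = Finsupp.single a (m a) :=
        Finsupp.support_subset_singleton.1 fun j hj => Finset.mem_singleton.2 (h j hj)
      have hdeg : m.degree = D := by
        by_contra hD
        exact mem_support_iff.1 hm (hp.coeff_eq_zero hD)
      rw [hma, Finsupp.degree_single] at hdeg
      exact hne (hdeg ▸ hma)
    have hfactor : (Pi.single a 1 : σ → R) j ^ m j = 0 := by
      rw [Pi.single_eq_of_ne hja, zero_pow (m.mem_support_iff.1 hjm)]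
    rw [Finset.prod_eq_zero hjm hfactor, mul_zero]
  · intro h
    rw [notMem_support_iff.1 h, zero_mul]

theorem coeff_eq_zero_of_eval_mul_eq [CommRing R] [IsDomain R] [Infinite R] {c : σ → R}
    {f : MvPolynomial σ R} (hf : ∀ x, eval (c * x) f = eval x f) {m : σ →₀ ℕ}
    (hm : (m.prod fun j k => c j ^ k) ≠ 1) : coeff m f = 0 := by
  have hscaled : bind₁ (fun j => C (c j) * X j) f = f := by
    refine MvPolynomial.funext fun x => ?_
    rw [← hf x]
    change eval₂Hom (RingHom.id R) x _ = _
    rw [eval₂Hom_bind₁]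
    simp only [coe_eval₂Hom, eval₂_mul, eval₂_C, RingHom.id_apply, eval₂_X, ← Pi.mul_def, eval₂_id]
  have hcoeff := coeff_bind₁_C_mul_X c f m
  rw [hscaled] at hcoeff
  exact (mul_left_eq_self₀.mp hcoeff.symm).resolve_left hm

end MvPolynomial

theorem IsPrimitiveRoot.zpow_sub_eq_one_iff_modEq {G : Type*} [DivisionCommMonoid G] {ζ : G}
    {e : ℕ} (hζ : IsPrimitiveRoot ζ e) (a b : ℕ) : ζ ^ ((a : ℤ) - b) = 1 ↔ a ≡ b [MOD e] := by
  rw [hζ.zpow_eq_one_iff_dvd, Nat.modEq_iff_dvd, ← dvd_neg, neg_sub]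

theorem stmt_9_general {n e dd : ℕ} [NeZero n] (he : 1 ≤ e) (ζ : ℂ) (hζ : IsPrimitiveRoot ζ e)
    (d : Fin n → ℕ) (hddpos : 0 < dd)
    (hed1 : e ∣ d 0)
    (f : MvPolynomial (Fin n) ℂ) (hhom : f.IsHomogeneous dd)
    (hinv : ∀ x : Fin n → ℂ,
      MvPolynomial.eval
        ((Matrix.diagonal (fun i => ζ ^ ((1 : ℤ) - (d i : ℤ)))).mulVec x) f
        = MvPolynomial.eval x f)
    (hfe₁ : MvPolynomial.eval (Pi.single (0 : Fin n) 1) f = 0)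
    (hmod : ∀ k : Fin n, k ≠ 0 → ¬ (dd ≡ d k [MOD e])) :
    ∀ i, MvPolynomial.eval (Pi.single (0 : Fin n) 1) (pderiv i f) = 0 := by
  set c : Fin n → ℂ := fun i => ζ ^ ((1 : ℤ) - (d i : ℤ))
  have hζ0 : ζ ≠ 0 := hζ.ne_zero (by omega)
  have hc0 : c 0 = ζ := by
    simp only [c, zpow_sub₀ hζ0, zpow_one, zpow_natCast, (hζ.pow_eq_one_iff_dvd _).2 hed1, div_one]
  have hscale : ∀ x, eval (c * x) f = eval x f := fun x => by
    rw [← hinv x, show diagonal c *ᵥ x = c * x from funext (mulVec_diagonal c x)]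
  intro i
  rw [hhom.pderiv.eval_piSingle_one, coeff_pderiv]
  obtain rfl | hi := eq_or_ne i 0
  · rw [← Finsupp.single_add, Nat.sub_add_cancel hddpos, ← hhom.eval_piSingle_one, hfe₁, zero_mul]
  · have hmonomial : ((Finsupp.single 0 (dd - 1) + Finsupp.single i 1).prod fun j k => c j ^ k)
        = ζ ^ ((dd : ℤ) - d i) := by
      rw [Finsupp.prod_add_index' (fun _ => pow_zero _) (fun _ _ _ => pow_add _ _ _),
        Finsupp.prod_single_index (h := fun j k => c j ^ k) (pow_zero _),
        Finsupp.prod_single_index (h := fun j k => c j ^ k) (pow_zero _), hc0, pow_one,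
        ← zpow_natCast, ← zpow_add₀ hζ0]
      congr 1
      omega
    refine mul_eq_zero_of_left (coeff_eq_zero_of_eval_mul_eq hscale ?_) _
    rw [hmonomial, Ne, hζ.zpow_sub_eq_one_iff_modEq]
    exact hmod i hi

theorem stmt_9 {n e dd : ℕ} [NeZero n] (he : 1 ≤ e) (ζ : ℂ) (hζ : IsPrimitiveRoot ζ e)
    (d : Fin n → ℕ) (hdpos : ∀ i, 0 < d i) (hddpos : 0 < dd)
    (hed1 : e ∣ d 0)
    (f : MvPolynomial (Fin n) ℂ) (hhom : f.IsHomogeneous dd)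
    (hinv : ∀ x : Fin n → ℂ,
      MvPolynomial.eval
        ((Matrix.diagonal (fun i => ζ ^ ((1 : ℤ) - (d i : ℤ)))).mulVec x) f
        = MvPolynomial.eval x f)
    (hfe₁ : MvPolynomial.eval (Pi.single (0 : Fin n) 1) f = 0)
    (hmod : ∀ k : Fin n, k ≠ 0 → ¬ (dd ≡ d k [MOD e])) :
    ∀ i, MvPolynomial.eval (Pi.single (0 : Fin n) 1) (pderiv i f) = 0 :=
  stmt_9_general he ζ hζ d hddpos hed1 f hhom hinv hfe₁ hmod
end

section
/- Let W be a finite subgroup of GLₙ(ℂ) and let f₁, …, fₙ ∈ ℂ[x₁,…,xₙ] be algebraically independent homogeneous polynomials, of degrees d₁, …, dₙ, that generate the algebra ℂ[x₁,…,xₙ]^W of W-invariant polynomials. Then the map v ↦ (f₂(v),…,fₙ(v)) induces a bijection from the quotient Z(f₁)/W of {v ∈ ℂⁿ∖{0} : f₁(v) = 0} by the action of W and of scalar multiplication, onto the weighted projective space ℙ(d₂,…,dₙ). Concretely: (i) for v ≠ 0 with f₁(v) = 0, not all of f₂(v),…,fₙ(v) vanish; (ii) for nonzero u, v with f₁(u)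 = f₁(v) = 0, there exists t ∈ ℂ* with fᵢ(u) = t^{dᵢ}·fᵢ(v) for all i ≥ 2 iff u = s·(g·v) for some g ∈ W, s ∈ ℂ*; (iii) every (x₂,…,xₙ) ∈ ℂⁿ⁻¹∖{0} equals (t^{d₂}f₂(v),…,t^{dₙ}fₙ(v)) for some t ∈ ℂ* and some v ≠ 0 with f₁(v) = 0. -/
/-!
The invariant ring `ℂ[x]^W = ℂ[f₁, …, fₙ]` is a polynomial ring over which `ℂ[x]` is integral
(each `p` is a root of `∏_{g ∈ W} (T - g • p)`), and `W` acts transitively on the primes of `ℂ[x]`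
lying over a given prime of `ℂ[x]^W`. On maximal ideals, i.e. on points, this says that
`v ↦ (fᵢ(v))ᵢ` maps `ℂⁿ` onto `ℂⁿ` and that its fibres are exactly the `W`-orbits.
By homogeneity, scaling `v` by `t` scales `(fᵢ(v))ᵢ` with weights `t ^ dᵢ`. The `dᵢ` are
positive because a homogeneous polynomial of degree `0` is a constant, hence algebraic. So all
`fᵢ` vanish at `0`, and `0` is the only point of its fibre, which gives (i).
-/

noncomputable section
open MvPolynomial Matrix
open scoped Pointwise

namespace MvPolynomial.IsHomogeneous

variable {σ R : Type*} [CommRing R] {p : MvPolynomial σ R} {k : ℕ}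

lemma eval_smul (hp : p.IsHomogeneous k) (s : R) (v : σ → R) :
    eval (s • v) p = s ^ k * eval v p := by
  rw [eval_eq, eval_eq, Finset.mul_sum]
  refine Finset.sum_congr rfl fun m hm => ?_
  have hdeg : ∑ i ∈ m.support, m i = k := by
    change m.degree = k
    rw [Finsupp.degree_eq_weight_one]
    exact hp (mem_support_iff.mp hm)
  simp only [Pi.smul_apply, smul_eq_mul, mul_pow, Finset.prod_mul_distrib,
    Finset.prod_pow_eq_pow_sum, hdeg]
  ring

lemma eval_zero (hp : p.IsHomogeneous k) (hk : k ≠ 0) : eval 0 p = 0 := by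
  simpa [zero_pow hk] using hp.eval_smul 0 0

lemma ne_zero_of_transcendental [Nontrivial R] (hp : p.IsHomogeneous k)
    (ht : Transcendental R p) : k ≠ 0 := by
  rintro rfl
  rw [totalDegree_eq_zero_iff_eq_C.1 (Nat.le_zero.1 hp.totalDegree_le)] at ht
  exact ht (isAlgebraic_algebraMap _)

end MvPolynomial.IsHomogeneous

instance FixedPoints.isInvariant_subalgebra (A B G : Type*) [CommSemiring A] [CommRing B]
    [Algebra A B] [Group G] [MulSemiringAction G B] [SMulCommClass G A B] :
    Algebra.IsInvariant (FixedPoints.subalgebra A B G) B G :=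
  ⟨fun b hb => ⟨⟨b, hb⟩, rfl⟩⟩

namespace MvPolynomial

section GLAction

variable {σ R : Type*} [Fintype σ] [DecidableEq σ] [CommRing R]

-- Linear change of variables by `g⁻¹`, so that `(g • p) v = p (g⁻¹ v)` is a left action.
instance : MulSemiringAction (GL σ R) (MvPolynomial σ R) where
  smul g p := bind₁ (↑g⁻¹ : Matrix σ σ R).toMvPolynomial p
  one_smul p := by
    change bind₁ _ p = p
    rw [inv_one, Units.val_one, toMvPolynomial_one, bind₁_X_left, AlgHom.id_apply]
  mul_smul g h p := by
    change bind₁ _ p = bind₁ _ (bind₁ _ p)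
    simp only [bind₁_bind₁, _root_.mul_inv_rev, Units.val_mul, ← Matrix.toMvPolynomial_mul]
  smul_zero g := map_zero _
  smul_add g := map_add _
  smul_one g := map_one _
  smul_mul g := map_mul _

lemma GL_smul_eq_bind₁ (g : GL σ R) (p : MvPolynomial σ R) :
    g • p = bind₁ (↑g⁻¹ : Matrix σ σ R).toMvPolynomial p := rfl

instance : SMulCommClass (GL σ R) R (MvPolynomial σ R) where
  smul_comm g r p := by simp only [GL_smul_eq_bind₁, map_smul]

lemma eval_GL_smul (g : GL σ R) (p : MvPolynomial σ R) (v : σ → R) :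
    eval v (g • p) = eval ((↑g⁻¹ : Matrix σ σ R) *ᵥ v) p := by
  have := eval₂Hom_bind₁ (RingHom.id R) v (↑g⁻¹ : Matrix σ σ R).toMvPolynomial p
  change eval v _ = eval (fun i => eval v _) p at this
  simp only [toMvPolynomial_eval_eq_apply] at this
  exact this

end GLAction

section Points

variable {σ K : Type*} [Field K]

lemma vanishingIdeal_singleton_injective :
    Function.Injective fun v : σ → K => vanishingIdeal K {v} := by
  intro u v huv
  funext i
  have hu : X i - C (u i) ∈ vanishingIdeal K {u} := by simp
  rw [show vanishingIdeal K {u} = vanishingIdeal K {v} from huv,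
    mem_vanishingIdeal_singleton_iff] at hu
  simpa [sub_eq_zero, eq_comm] using hu

lemma exists_eval_eq_of_isIntegral [Finite σ] [IsAlgClosed K]
    (A : Subalgebra K (MvPolynomial σ K)) [Algebra.IsIntegral A (MvPolynomial σ K)]
    (χ : A →ₐ[K] K) : ∃ v : σ → K, ∀ a : A, eval v a = χ a := by
  have : (RingHom.ker χ).IsMaximal :=
    RingHom.ker_isMaximal_of_surjective χ fun k => ⟨algebraMap K A k, χ.commutes k⟩
  obtain ⟨Q, hQ, hQχ⟩ := Ideal.exists_ideal_over_maximal_of_isIntegral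
    (S := MvPolynomial σ K) (RingHom.ker χ) (by
      rw [(RingHom.injective_iff_ker_eq_bot _).1 Subtype.val_injective]
      exact bot_le)
  obtain ⟨v, rfl⟩ := isMaximal_iff_eq_vanishingIdeal_singleton.1 hQ
  refine ⟨v, fun a => ?_⟩
  have : a - algebraMap K A (χ a) ∈ RingHom.ker χ := by simp
  rw [← hQχ, Ideal.mem_comap, mem_vanishingIdeal_singleton_iff] at this
  simpa [sub_eq_zero] using this

variable [Fintype σ] [DecidableEq σ]

lemma GL_smul_vanishingIdeal_singleton (g : GL σ K) (v : σ → K) :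
    g • vanishingIdeal K {v} = vanishingIdeal K {(↑g : Matrix σ σ K) *ᵥ v} := by
  ext p
  simp only [Ideal.mem_pointwise_smul_iff_inv_smul_mem, mem_vanishingIdeal_singleton_iff,
    aeval_eq_eval, eval_GL_smul, inv_inv]

lemma mem_fixedPoints_subalgebra_iff [Infinite K] {W : Subgroup (GL σ K)}
    {p : MvPolynomial σ K} :
    p ∈ FixedPoints.subalgebra K (MvPolynomial σ K) W ↔
      ∀ g ∈ W, ∀ v : σ → K, eval ((g : Matrix σ σ K) *ᵥ v) p = eval v p := by
  refine ⟨fun hp g hg v => ?_, fun h g => funext fun v => ?_⟩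
  · have := congrArg (eval v) (hp ⟨g⁻¹, inv_mem hg⟩)
    rwa [Subgroup.mk_smul, eval_GL_smul, inv_inv] at this
  · rw [Subgroup.smul_def, eval_GL_smul, h _ (inv_mem g.2)]

end Points

variable {σ ι K : Type*} [Fintype σ] [DecidableEq σ] [Field K]

section Invariants

variable (W : Subgroup (GL σ K)) [Finite W]

lemma exists_mulVec_eq_of_forall_fixedPoints_eval_eq {u v : σ → K}
    (h : ∀ p ∈ FixedPoints.subalgebra K (MvPolynomial σ K) W, eval u p = eval v p) :
    ∃ g ∈ W, u = (g : Matrix σ σ K) *ᵥ v := by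
  obtain ⟨g, hg⟩ := Algebra.IsInvariant.exists_smul_of_under_eq
    (FixedPoints.subalgebra K (MvPolynomial σ K) W) (MvPolynomial σ K) W
    (vanishingIdeal K {v}) (vanishingIdeal K {u}) (by
      ext ⟨p, hp⟩
      simp [Ideal.under, h p hp])
  refine ⟨g, g.2, vanishingIdeal_singleton_injective ?_⟩
  exact hg.trans (GL_smul_vanishingIdeal_singleton (g : GL σ K) v)

lemma exists_eval_eq_of_fixedPoints_algHom [IsAlgClosed K]
    (χ : FixedPoints.subalgebra K (MvPolynomial σ K) W →ₐ[K] K) :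
    ∃ v : σ → K, ∀ a : FixedPoints.subalgebra K (MvPolynomial σ K) W, eval v a = χ a :=
  have := Algebra.IsInvariant.isIntegral (FixedPoints.subalgebra K (MvPolynomial σ K) W)
    (MvPolynomial σ K) W
  exists_eval_eq_of_isIntegral _ χ

end Invariants

section Generators

variable {W : Subgroup (GL σ K)} [Finite W] {f : ι → MvPolynomial σ K}

lemma exists_mulVec_eq_of_eval_eq
    (hA : Algebra.adjoin K (Set.range f) = FixedPoints.subalgebra K (MvPolynomial σ K) W)
    {u v : σ → K} (h : ∀ i, eval u (f i) = eval v (f i)) :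
    ∃ g ∈ W, u = (g : Matrix σ σ K) *ᵥ v := by
  refine exists_mulVec_eq_of_forall_fixedPoints_eval_eq W fun p hp => ?_
  rw [← hA] at hp
  exact Algebra.adjoin_le (S := AlgHom.equalizer (aeval u) (aeval v))
    (Set.range_subset_iff.2 h) hp

lemma exists_eval_eq [IsAlgClosed K]
    (hA : Algebra.adjoin K (Set.range f) = FixedPoints.subalgebra K (MvPolynomial σ K) W)
    (halg : AlgebraicIndependent K f) (y : ι → K) :
    ∃ v : σ → K, ∀ i, eval v (f i) = y i := by
  let e := (Subalgebra.equivOfEq _ _ hA.symm).trans halg.aevalEquiv.symm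
  obtain ⟨v, hv⟩ := exists_eval_eq_of_fixedPoints_algHom W ((aeval y).comp e)
  refine ⟨v, fun i => ?_⟩
  have := hv (e.symm (X i))
  rw [AlgHom.comp_apply, AlgEquiv.coe_toAlgHom, AlgEquiv.apply_symm_apply, aeval_X] at this
  simpa [e, halg.algebraMap_aevalEquiv] using this

lemma exists_eval_ne_zero_of_ne_zero
    (hA : Algebra.adjoin K (Set.range f) = FixedPoints.subalgebra K (MvPolynomial σ K) W)
    (hf0 : ∀ i, eval 0 (f i) = 0) {v : σ → K} (hv : v ≠ 0) :
    ∃ i, eval v (f i) ≠ 0 := by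
  by_contra! h
  obtain ⟨g, -, hg⟩ := exists_mulVec_eq_of_eval_eq hA fun i => (h i).trans (hf0 i).symm
  exact hv (hg.trans (mulVec_zero _))

lemma exists_eval_eq_pow_mul_iff [Infinite K]
    (hA : Algebra.adjoin K (Set.range f) = FixedPoints.subalgebra K (MvPolynomial σ K) W)
    {d : ι → ℕ} (hhom : ∀ i, (f i).IsHomogeneous (d i)) {u v : σ → K} :
    (∃ t : K, t ≠ 0 ∧ ∀ i, eval u (f i) = t ^ d i * eval v (f i)) ↔
      ∃ g ∈ W, ∃ s : K, s ≠ 0 ∧ u = s • (g : Matrix σ σ K) *ᵥ v := by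
  constructor
  · rintro ⟨t, ht, h⟩
    obtain ⟨g, hg, rfl⟩ := exists_mulVec_eq_of_eval_eq hA (v := t • v) fun i => by
      rw [h, (hhom i).eval_smul]
    exact ⟨g, hg, t, ht, mulVec_smul _ _ _⟩
  · rintro ⟨g, hg, s, hs, rfl⟩
    refine ⟨s, hs, fun i => ?_⟩
    have hfi : f i ∈ FixedPoints.subalgebra K (MvPolynomial σ K) W :=
      hA ▸ Algebra.subset_adjoin (Set.mem_range_self i)
    rw [(hhom i).eval_smul, mem_fixedPoints_subalgebra_iff.1 hfi g hg]

end Generators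

end MvPolynomial

theorem stmt_11 {n : ℕ} [NeZero n] (W : Subgroup (GL (Fin n) ℂ)) (hW : Finite W)
    (f : Fin n → MvPolynomial (Fin n) ℂ) (d : Fin n → ℕ)
    (hhom : ∀ i, (f i).IsHomogeneous (d i))
    (halg : AlgebraicIndependent ℂ f)
    (hinv : ∀ i, ∀ g ∈ W, ∀ v : Fin n → ℂ,
      MvPolynomial.eval ((g : Matrix (Fin n) (Fin n) ℂ).mulVec v) (f i)
        = MvPolynomial.eval v (f i))
    (hgen : ∀ p : MvPolynomial (Fin n) ℂ,
      (∀ g ∈ W, ∀ v : Fin n → ℂ,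
        MvPolynomial.eval ((g : Matrix (Fin n) (Fin n) ℂ).mulVec v) p
          = MvPolynomial.eval v p) →
      p ∈ Algebra.adjoin ℂ (Set.range f)) :
    -- (i) on Z(f₀) ∖ {0}, not all of the fᵢ, i ≠ 0, vanish
    (∀ v : Fin n → ℂ, v ≠ 0 → MvPolynomial.eval v (f 0) = 0 →
      ∃ i, i ≠ 0 ∧ MvPolynomial.eval v (f i) ≠ 0) ∧
    -- (ii) injectivity on the level of the quotients
    (∀ u v : Fin n → ℂ, u ≠ 0 → v ≠ 0 →
      MvPolynomial.eval u (f 0) = 0 → MvPolynomial.eval v (f 0) = 0 →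
      ((∃ t : ℂ, t ≠ 0 ∧ ∀ i, i ≠ 0 → MvPolynomial.eval u (f i)
          = t ^ d i * MvPolynomial.eval v (f i))
        ↔ (∃ g ∈ W, ∃ s : ℂ, s ≠ 0 ∧
            u = s • (g : Matrix (Fin n) (Fin n) ℂ).mulVec v))) ∧
    -- (iii) surjectivity onto the weighted projective space ℙ(d₂,…,dₙ)
    (∀ x : Fin n → ℂ, (∃ i, i ≠ 0 ∧ x i ≠ 0) →
      ∃ v : Fin n → ℂ, v ≠ 0 ∧ MvPolynomial.eval v (f 0) = 0 ∧ ∃ t : ℂ, t ≠ 0 ∧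
        ∀ i, i ≠ 0 → x i = t ^ d i * MvPolynomial.eval v (f i)) := by
  have hA :
      Algebra.adjoin ℂ (Set.range f) = FixedPoints.subalgebra ℂ (MvPolynomial (Fin n) ℂ) W :=
    le_antisymm (Algebra.adjoin_le (Set.range_subset_iff.2 fun i =>
      mem_fixedPoints_subalgebra_iff.2 (hinv i))) fun p hp =>
        hgen p (mem_fixedPoints_subalgebra_iff.1 hp)
  have hf0 : ∀ i, eval 0 (f i) = 0 := fun i =>
    (hhom i).eval_zero ((hhom i).ne_zero_of_transcendental (halg.transcendental i))
  refine ⟨fun v hv hv0 => ?_, fun u v _ _ hu0 hv0 => ?_, fun x ⟨i, hi, hxi⟩ => ?_⟩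
  · obtain ⟨i, hi⟩ := exists_eval_ne_zero_of_ne_zero hA hf0 hv
    exact ⟨i, fun h => hi (h ▸ hv0), hi⟩
  · rw [← exists_eval_eq_pow_mul_iff hA hhom]
    refine exists_congr fun t => and_congr_right fun _ => ⟨fun h i => ?_, fun h i _ => h i⟩
    rcases eq_or_ne i 0 with rfl | hi
    · rw [hu0, hv0, mul_zero]
    · exact h i hi
  · obtain ⟨v, hv⟩ := exists_eval_eq hA halg (Function.update x 0 0)
    refine ⟨v, ?_, by rw [hv, Function.update_self], 1, one_ne_zero, fun j hj => ?_⟩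
    · rintro rfl
      exact hxi (by rw [← Function.update_of_ne hi 0 x, ← hv, hf0])
    · rw [one_pow, one_mul, hv, Function.update_of_ne hj]
end
end

section
/- Let a, b, c ∈ ℂ and let F = a·(x⁴+y⁴+z⁴+t⁴) + b·xyzt + c·(x²+y²+z²+t²)² ∈ ℂ[x,y,z,t]. Assume F is irreducible. Then the projective surface Z(F) is smooth or has only A₁ singularities; equivalently, for every p ∈ ℂ⁴∖{0} such that F(p) = 0 and all four first partial derivatives of F vanish at p, the 4×4 Hessian matrix (∂²F/∂xᵢ∂xⱼ)(p) has rank 3. -/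
noncomputable section
open MvPolynomial Matrix

private lemma pd_ofNat (i : Fin 4) (n : ℕ) [n.AtLeastTwo] :
    pderiv i (OfNat.ofNat n : MvPolynomial (Fin 4) ℂ) = 0 := by
  rw [← map_ofNat (C : ℂ →+* MvPolynomial (Fin 4) ℂ) n]; exact pderiv_C

private lemma pd4 (i : Fin 4) : pderiv i (4 : MvPolynomial (Fin 4) ℂ) = 0 := pd_ofNat i 4
private lemma pd2 (i : Fin 4) : pderiv i (2 : MvPolynomial (Fin 4) ℂ) = 0 := pd_ofNat i 2
private lemma pd3 (i : Fin 4) : pderiv i (3 : MvPolynomial (Fin 4) ℂ) = 0 := pd_ofNat i 3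

private lemma mzero {w u : ℂ} (hw : w ≠ 0) (h : w * u = 0) : u = 0 := by
  rcases mul_eq_zero.mp h with h' | h'
  · exact absurd h' hw
  · exact h'

private lemma wrapmu (x y z t v0 v1 v2 v3 : ℂ) (hx : x ≠ 0)
    (h1 : x*v1 = y*v0) (h2 : x*v2 = z*v0) (h3 : x*v3 = t*v0) :
    ∃ μ : ℂ, v0 = μ*x ∧ v1 = μ*y ∧ v2 = μ*z ∧ v3 = μ*t := by
  refine ⟨v0/x, by field_simp, ?_, ?_, ?_⟩
  · field_simp
    linear_combination h1
  · field_simp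
    linear_combination h2
  · field_simp
    linear_combination h3

/-- n=1 case : only `x` nonzero. -/
private lemma LA (a b c x v0 v1 v2 v3 : ℂ)
    (h2 : ¬(a = 0 ∧ c = 0)) (hx : x ≠ 0)
    (hE0 : 4*(a+c)*x^3 = 0)
    (hR1 : 4*c*x^2*v1 = 0) (hR2 : 4*c*x^2*v2 = 0) (hR3 : 4*c*x^2*v3 = 0) :
    ∃ μ : ℂ, v0 = μ*x ∧ v1 = μ*0 ∧ v2 = μ*0 ∧ v3 = μ*0 := by
  have hac : a + c = 0 := by
    have h : (4*x^3) * (a+c) = 0 := by linear_combination hE0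
    exact mzero (mul_ne_zero (by norm_num) (pow_ne_zero 3 hx)) h
  have hc : c ≠ 0 := by
    intro h
    exact h2 ⟨by linear_combination hac - h, h⟩
  have hw : (4*c*x^2 : ℂ) ≠ 0 :=
    mul_ne_zero (mul_ne_zero (by norm_num) hc) (pow_ne_zero 2 hx)
  have hv1 : v1 = 0 := mzero hw hR1
  have hv2 : v2 = 0 := mzero hw hR2
  have hv3 : v3 = 0 := mzero hw hR3
  exact wrapmu x 0 0 0 v0 v1 v2 v3 hx (by simp [hv1]) (by simp [hv2]) (by simp [hv3])

/-- n=2 case : `x, y` nonzero, other coordinates zero. -/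
private lemma LB (a b c x y v0 v1 v2 v3 : ℂ)
    (h1 : ¬(a = 0 ∧ b = 0)) (h2 : ¬(a = 0 ∧ c = 0))
    (h3p : ¬(a = -(2*c) ∧ b = 8*c)) (h3m : ¬(a = -(2*c) ∧ b = -(8*c)))
    (hx : x ≠ 0) (hy : y ≠ 0)
    (hE0 : 4*a*x^3 + 4*c*(x^2+y^2)*x = 0)
    (hE1 : 4*a*y^3 + 4*c*(x^2+y^2)*y = 0)
    (hR0 : (12*a*x^2 + 4*c*(x^2+y^2) + 8*c*x^2)*v0 + 8*c*(x*y)*v1 = 0)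
    (hR1 : 8*c*(x*y)*v0 + (12*a*y^2 + 4*c*(x^2+y^2) + 8*c*y^2)*v1 = 0)
    (hR2 : 4*c*(x^2+y^2)*v2 + b*(x*y)*v3 = 0)
    (hR3 : b*(x*y)*v2 + 4*c*(x^2+y^2)*v3 = 0) :
    ∃ μ : ℂ, v0 = μ*x ∧ v1 = μ*y ∧ v2 = μ*0 ∧ v3 = μ*0 := by
  by_cases ha : a = 0
  · subst ha
    have hb : b ≠ 0 := fun h => h1 ⟨rfl, h⟩
    have hc : c ≠ 0 := fun h => h2 ⟨rfl, h⟩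
    have hs : x^2 + y^2 = 0 := by
      have h : (4*c*x) * (x^2+y^2) = 0 := by linear_combination hE0
      exact mzero (mul_ne_zero (mul_ne_zero (by norm_num) hc) hx) h
    have hbxy : b*(x*y) ≠ 0 := mul_ne_zero hb (mul_ne_zero hx hy)
    have hv3 : v3 = 0 := by
      refine mzero hbxy ?_
      linear_combination hR2 + (-4*c*v2) * hs
    have hv2 : v2 = 0 := by
      refine mzero hbxy ?_
      linear_combination hR3 + (-4*c*v3) * hs
    have hxv2 : x*v0 + y*v1 = 0 := by
      refine mzero (mul_ne_zero (mul_ne_zero (by norm_num : (8:ℂ) ≠ 0) hc) hx) ?_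
      linear_combination hR0 + (-4*c*v0) * hs
    have hG1 : x*v1 = y*v0 := by
      have h : y * (x*v1 - y*v0) = 0 := by linear_combination x * hxv2 + (-v0) * hs
      exact sub_eq_zero.mp (mzero hy h)
    exact wrapmu x y 0 0 v0 v1 v2 v3 hx hG1 (by simp [hv2]) (by simp [hv3])
  · have h01 : x^2 = y^2 := by
      have h : (4*a*(x*y)) * (x^2 - y^2) = 0 := by
        linear_combination y * hE0 + (-x) * hE1
      exact sub_eq_zero.mp (mzero (mul_ne_zero (mul_ne_zero (by norm_num) ha)
        (mul_ne_zero hx hy)) h)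
    have ha2c : a = -(2*c) := by
      have h : (4*x^3) * (a + 2*c) = 0 := by linear_combination hE0 + (4*c*x) * h01
      have := mzero (mul_ne_zero (by norm_num : (4:ℂ) ≠ 0) (pow_ne_zero 3 hx)) h
      linear_combination this
    have hc : c ≠ 0 := fun h => ha (by linear_combination ha2c - 2*h)
    have hbp : (8*c - b) ≠ 0 := by
      intro h
      exact h3p ⟨ha2c, by linear_combination -h⟩
    have hbm : (8*c + b) ≠ 0 := by
      intro h
      exact h3m ⟨ha2c, by linear_combination h⟩
    have hw : ((8*c - b) * ((8*c + b) * x^4) : ℂ) ≠ 0 :=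
      mul_ne_zero hbp (mul_ne_zero hbm (pow_ne_zero 4 hx))
    have hv2 : v2 = 0 := by
      refine mzero hw ?_
      linear_combination (4*c*y^2 + 4*c*x^2) * hR2 + (-b*x*y) * hR3
        + (16*c^2*y^2*v2 + 48*c^2*x^2*v2 - b^2*x^2*v2) * h01
    have hv3 : v3 = 0 := by
      refine mzero hw ?_
      linear_combination (-b*x*y) * hR2 + (4*c*y^2 + 4*c*x^2) * hR3
        + (16*c^2*y^2*v3 + 48*c^2*x^2*v3 - b^2*x^2*v3) * h01
    have hyx : y*v1 = x*v0 := by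
      have h : (8*c*x) * (y*v1 - x*v0) = 0 := by
        linear_combination hR0 + (4*c*v0) * h01 + (-12*x^2*v0) * ha2c
      exact sub_eq_zero.mp (mzero (mul_ne_zero (mul_ne_zero (by norm_num) hc) hx) h)
    have hG1 : x*v1 = y*v0 := by
      have h : y * (x*v1 - y*v0) = 0 := by linear_combination x * hyx + v0 * h01
      exact sub_eq_zero.mp (mzero hy h)
    exact wrapmu x y 0 0 v0 v1 v2 v3 hx hG1 (by simp [hv2]) (by simp [hv3])
/-- n=3 case : `x,y,z` nonzero, `t = 0`. -/
private lemma LC (a b c x y z v0 v1 v2 v3 : ℂ)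
    (h1 : ¬(a = 0 ∧ b = 0)) (h2 : ¬(a = 0 ∧ c = 0))
    (hx : x ≠ 0) (hy : y ≠ 0) (hz : z ≠ 0)
    (hE0 : 4*a*x^3 + 4*c*(x^2+y^2+z^2)*x = 0)
    (hE1 : 4*a*y^3 + 4*c*(x^2+y^2+z^2)*y = 0)
    (hE2 : 4*a*z^3 + 4*c*(x^2+y^2+z^2)*z = 0)
    (hE3 : b*(x*y*z) = 0)
    (hR0 : (12*a*x^2 + 4*c*(x^2+y^2+z^2) + 8*c*x^2)*v0 + 8*c*(x*y)*v1 + 8*c*(x*z)*v2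
          + b*(y*z)*v3 = 0)
    (hR1 : 8*c*(x*y)*v0 + (12*a*y^2 + 4*c*(x^2+y^2+z^2) + 8*c*y^2)*v1 + 8*c*(y*z)*v2
          + b*(x*z)*v3 = 0)
    (hR2 : 8*c*(x*z)*v0 + 8*c*(y*z)*v1 + (12*a*z^2 + 4*c*(x^2+y^2+z^2) + 8*c*z^2)*v2
          + b*(x*y)*v3 = 0)
    (hR3 : b*(y*z)*v0 + b*(x*z)*v1 + b*(x*y)*v2 + 4*c*(x^2+y^2+z^2)*v3 = 0) :
    ∃ μ : ℂ, v0 = μ*x ∧ v1 = μ*y ∧ v2 = μ*z ∧ v3 = μ*0 := by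
  have hb : b = 0 := by
    rcases mul_eq_zero.mp hE3 with h | h
    · exact h
    · exact absurd h (mul_ne_zero (mul_ne_zero hx hy) hz)
  subst hb
  have ha : a ≠ 0 := fun h => h1 ⟨h, rfl⟩
  have h01 : x^2 = y^2 := by
    have h : (4*a*(x*y)) * (x^2 - y^2) = 0 := by
      linear_combination y * hE0 + (-x) * hE1
    exact sub_eq_zero.mp (mzero (mul_ne_zero (mul_ne_zero (by norm_num) ha)
      (mul_ne_zero hx hy)) h)
  have h02 : x^2 = z^2 := by
    have h : (4*a*(x*z)) * (x^2 - z^2) = 0 := by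
      linear_combination z * hE0 + (-x) * hE2
    exact sub_eq_zero.mp (mzero (mul_ne_zero (mul_ne_zero (by norm_num) ha)
      (mul_ne_zero hx hz)) h)
  have ha3c : a = -(3*c) := by
    have h : (4*x^3) * (a + 3*c) = 0 := by
      linear_combination hE0 + (4*c*x) * h01 + (4*c*x) * h02
    have := mzero (mul_ne_zero (by norm_num : (4:ℂ) ≠ 0) (pow_ne_zero 3 hx)) h
    linear_combination this
  have hc : c ≠ 0 := fun h => ha (by linear_combination ha3c - 3*h)
  have hv3 : v3 = 0 := by
    refine mzero (show (12*c*x^2 : ℂ) ≠ 0 from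
      mul_ne_zero (mul_ne_zero (by norm_num) hc) (pow_ne_zero 2 hx)) ?_
    linear_combination hR3 + (4*c*v3) * h01 + (4*c*v3) * h02
  have hw : (24*c*x^2 : ℂ) ≠ 0 :=
    mul_ne_zero (mul_ne_zero (by norm_num) hc) (pow_ne_zero 2 hx)
  have hk1 : y*v1 = x*v0 := by
    have h : (24*c*x^2) * (x*v0 - y*v1) = 0 := by
      linear_combination (-x) * hR0 + y * hR1
        + (8*c*z*v2 + 12*c*y*v1 + 4*c*x*v0 + 12*a*y*v1) * h01
        + (4*c*y*v1 - 4*c*x*v0) * h02 + (-12*x^2*y*v1 + 12*x^3*v0) * ha3c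
    exact (sub_eq_zero.mp (mzero hw h)).symm
  have hk2 : z*v2 = x*v0 := by
    have h : (24*c*x^2) * (x*v0 - z*v2) = 0 := by
      linear_combination (-x) * hR0 + z * hR2 + (4*c*z*v2 - 4*c*x*v0) * h01
        + (12*c*z*v2 + 8*c*y*v1 + 4*c*x*v0 + 12*a*z*v2) * h02
        + (-12*x^2*z*v2 + 12*x^3*v0) * ha3c
    exact (sub_eq_zero.mp (mzero hw h)).symm
  have hG1 : x*v1 = y*v0 := by
    have h : y * (x*v1 - y*v0) = 0 := by linear_combination x * hk1 + v0 * h01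
    exact sub_eq_zero.mp (mzero hy h)
  have hG2 : x*v2 = z*v0 := by
    have h : z * (x*v2 - z*v0) = 0 := by linear_combination x * hk2 + v0 * h02
    exact sub_eq_zero.mp (mzero hz h)
  exact wrapmu x y z 0 v0 v1 v2 v3 hx hG1 hG2 (by simp [hv3])
/-- n=4, all squares equal. -/
private lemma LDeq (a b c x y z t v0 v1 v2 v3 : ℂ)
    (h3p : ¬(a = -(2*c) ∧ b = 8*c)) (h3m : ¬(a = -(2*c) ∧ b = -(8*c)))
    (hx : x ≠ 0) (hy : y ≠ 0) (hz : z ≠ 0) (ht : t ≠ 0)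
    (h01 : x^2 = y^2) (h02 : x^2 = z^2) (h03 : x^2 = t^2)
    (hE0 : 4*a*x^3 + b*(y*z*t) + 4*c*(x^2+y^2+z^2+t^2)*x = 0)
    (hE1 : 4*a*y^3 + b*(x*z*t) + 4*c*(x^2+y^2+z^2+t^2)*y = 0)
    (hE2 : 4*a*z^3 + b*(x*y*t) + 4*c*(x^2+y^2+z^2+t^2)*z = 0)
    (hE3 : 4*a*t^3 + b*(x*y*z) + 4*c*(x^2+y^2+z^2+t^2)*t = 0)
    (hR0 : (12*a*x^2 + 4*c*(x^2+y^2+z^2+t^2) + 8*c*x^2)*v0 + (b*(z*t) + 8*c*(x*y))*v1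
         + (b*(y*t) + 8*c*(x*z))*v2 + (b*(y*z) + 8*c*(x*t))*v3 = 0)
    (hR1 : (b*(z*t) + 8*c*(x*y))*v0 + (12*a*y^2 + 4*c*(x^2+y^2+z^2+t^2) + 8*c*y^2)*v1
         + (b*(x*t) + 8*c*(y*z))*v2 + (b*(x*z) + 8*c*(y*t))*v3 = 0)
    (hR2 : (b*(y*t) + 8*c*(x*z))*v0 + (b*(x*t) + 8*c*(y*z))*v1
         + (12*a*z^2 + 4*c*(x^2+y^2+z^2+t^2) + 8*c*z^2)*v2 + (b*(x*y) + 8*c*(z*t))*v3 = 0)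
    (hR3 : (b*(y*z) + 8*c*(x*t))*v0 + (b*(x*z) + 8*c*(y*t))*v1
         + (b*(x*y) + 8*c*(z*t))*v2 + (12*a*t^2 + 4*c*(x^2+y^2+z^2+t^2) + 8*c*t^2)*v3 = 0) :
    ∃ μ : ℂ, v0 = μ*x ∧ v1 = μ*y ∧ v2 = μ*z ∧ v3 = μ*t := by
  by_cases h2c : a + 2*c = 0
  · exfalso
    have ha2c : a = -(2*c) := by linear_combination h2c
    have hbq : b*(x*y*z*t) + 8*c*x^4 = 0 := by
      linear_combination x * hE0 + (4*c*x^2) * h01 + (4*c*x^2) * h02 + (4*c*x^2) * h03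
        + (-4*x^4) * ha2c
    have hb2 : ((b - 8*c) * (b + 8*c)) * x^8 = 0 := by
      linear_combination (-8*c*x^4 + b*x*y*z*t) * hbq + (b^2*x^2*z^2*t^2) * h01
        + (b^2*x^4*t^2) * h02 + (b^2*x^6) * h03
    have hb2' : x^8 * ((b - 8*c) * (b + 8*c)) = 0 := by linear_combination hb2
    have h := mzero (pow_ne_zero 8 hx) hb2'
    rcases mul_eq_zero.mp h with h' | h'
    · exact h3p ⟨ha2c, by linear_combination h'⟩
    · exact h3m ⟨ha2c, by linear_combination h'⟩
  · have hw : (16*(a+2*c)*x^4 : ℂ) ≠ 0 :=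
      mul_ne_zero (mul_ne_zero (by norm_num) h2c) (pow_ne_zero 4 hx)
    have hk1 : y*v1 = x*v0 := by
      have h : (16*(a+2*c)*x^4) * (x*v0 - y*v1) = 0 := by
        linear_combination x^3 * hR0 + (-(x^2*y)) * hR1 + (x^2*v0) * hE0 + (-(y^2*v1)) * hE1
          + (-4*c*y*t^2*v1 - 4*c*y*z^2*v1 - 4*c*y^3*v1 - 8*c*x^2*t*v3 - 8*c*x^2*z*v2
             - 20*c*x^2*y*v1 - b*x*z*t*v1 - 4*a*y^3*v1 - 16*a*x^2*y*v1) * h01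
          + (-8*c*x^2*y*v1 + 8*c*x^3*v0) * h02 + (-8*c*x^2*y*v1 + 8*c*x^3*v0) * h03
      exact (sub_eq_zero.mp (mzero hw h)).symm
    have hk2 : z*v2 = x*v0 := by
      have h : (16*(a+2*c)*x^4) * (x*v0 - z*v2) = 0 := by
        linear_combination x^3 * hR0 + (-(x^2*z)) * hR2 + (x^2*v0) * hE0 + (-(z^2*v2)) * hE2
          + (-4*c*z^3*v2 - 4*c*x^2*z*v2 + 8*c*x^3*v0) * h01
          + (-4*c*z*t^2*v2 - 4*c*z^3*v2 - 8*c*x^2*t*v3 - 24*c*x^2*z*v2 - 8*c*x^2*y*v1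
             - b*x*y*t*v2 - 4*a*z^3*v2 - 16*a*x^2*z*v2) * h02
          + (-8*c*x^2*z*v2 + 8*c*x^3*v0) * h03
      exact (sub_eq_zero.mp (mzero hw h)).symm
    have hk3 : t*v3 = x*v0 := by
      have h : (16*(a+2*c)*x^4) * (x*v0 - t*v3) = 0 := by
        linear_combination x^3 * hR0 + (-(x^2*t)) * hR3 + (x^2*v0) * hE0 + (-(t^2*v3)) * hE3
          + (-4*c*t^3*v3 - 4*c*x^2*t*v3 + 8*c*x^3*v0) * h01
          + (-4*c*t^3*v3 - 4*c*x^2*t*v3 + 8*c*x^3*v0) * h02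
          + (-4*c*t^3*v3 - 28*c*x^2*t*v3 - 8*c*x^2*z*v2 - 8*c*x^2*y*v1 - b*x*y*z*v3
             - 4*a*t^3*v3 - 16*a*x^2*t*v3) * h03
      exact (sub_eq_zero.mp (mzero hw h)).symm
    have hG1 : x*v1 = y*v0 := by
      have h : y * (x*v1 - y*v0) = 0 := by linear_combination x * hk1 + v0 * h01
      exact sub_eq_zero.mp (mzero hy h)
    have hG2 : x*v2 = z*v0 := by
      have h : z * (x*v2 - z*v0) = 0 := by linear_combination x * hk2 + v0 * h02
      exact sub_eq_zero.mp (mzero hz h)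
    have hG3 : x*v3 = t*v0 := by
      have h : t * (x*v3 - t*v0) = 0 := by linear_combination x * hk3 + v0 * h03
      exact sub_eq_zero.mp (mzero ht h)
    exact wrapmu x y z t v0 v1 v2 v3 hx hG1 hG2 hG3
/-- n=4, squares pattern (α,α,α,β) with α ≠ β. -/
private lemma LD31 (a b c x y z t v0 v1 v2 v3 : ℂ) (ha : a ≠ 0)
    (hx : x ≠ 0) (hy : y ≠ 0) (hz : z ≠ 0) (ht : t ≠ 0)
    (h01 : x^2 = y^2) (h02 : x^2 = z^2) (h03 : x^2 ≠ t^2)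
    (hE0 : 4*a*x^3 + b*(y*z*t) + 4*c*(x^2+y^2+z^2+t^2)*x = 0)
    (hE1 : 4*a*y^3 + b*(x*z*t) + 4*c*(x^2+y^2+z^2+t^2)*y = 0)
    (hE2 : 4*a*z^3 + b*(x*y*t) + 4*c*(x^2+y^2+z^2+t^2)*z = 0)
    (hE3 : 4*a*t^3 + b*(x*y*z) + 4*c*(x^2+y^2+z^2+t^2)*t = 0)
    (hR0 : (12*a*x^2 + 4*c*(x^2+y^2+z^2+t^2) + 8*c*x^2)*v0 + (b*(z*t) + 8*c*(x*y))*v1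
         + (b*(y*t) + 8*c*(x*z))*v2 + (b*(y*z) + 8*c*(x*t))*v3 = 0)
    (hR1 : (b*(z*t) + 8*c*(x*y))*v0 + (12*a*y^2 + 4*c*(x^2+y^2+z^2+t^2) + 8*c*y^2)*v1
         + (b*(x*t) + 8*c*(y*z))*v2 + (b*(x*z) + 8*c*(y*t))*v3 = 0)
    (hR2 : (b*(y*t) + 8*c*(x*z))*v0 + (b*(x*t) + 8*c*(y*z))*v1
         + (12*a*z^2 + 4*c*(x^2+y^2+z^2+t^2) + 8*c*z^2)*v2 + (b*(x*y) + 8*c*(z*t))*v3 = 0)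
    (hR3 : (b*(y*z) + 8*c*(x*t))*v0 + (b*(x*z) + 8*c*(y*t))*v1
         + (b*(x*y) + 8*c*(z*t))*v2 + (12*a*t^2 + 4*c*(x^2+y^2+z^2+t^2) + 8*c*t^2)*v3 = 0) :
    ∃ μ : ℂ, v0 = μ*x ∧ v1 = μ*y ∧ v2 = μ*z ∧ v3 = μ*t := by
  have hxt : x^2 - t^2 ≠ 0 := sub_ne_zero.mpr h03
  have hV : a*(x^2+t^2) + c*(x^2+y^2+z^2+t^2) = 0 := by
    have h : (x^2 - t^2) * ((a*(x^2+t^2) + c*(x^2+y^2+z^2+t^2)) * 4) = 0 := by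
      linear_combination x * hE0 + (-t) * hE3
    have h' := mzero hxt h
    linear_combination h' / 4
  have hw : (8*a*((x^2-t^2)*x^2) : ℂ) ≠ 0 :=
    mul_ne_zero (mul_ne_zero (by norm_num) ha) (mul_ne_zero hxt (pow_ne_zero 2 hx))
  have hk1 : y*v1 = x*v0 := by
    have h : (8*a*((x^2-t^2)*x^2)) * (x*v0 - y*v1) = 0 := by
      linear_combination x^3 * hR0 + (-(x^2*y)) * hR1 + (x^2*v0) * hE0 + (-(y^2*v1)) * hE1
        + (-4*c*y*t^2*v1 - 4*c*y*z^2*v1 - 4*c*y^3*v1 - 8*c*x^2*t*v3 - 8*c*x^2*z*v2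
           - 12*c*x^2*y*v1 - 8*c*x^3*v0 - b*x*z*t*v1 - 4*a*y^3*v1 - 16*a*x^2*y*v1) * h01
        + (8*x^2*y*v1 - 8*x^3*v0) * hV
    exact (sub_eq_zero.mp (mzero hw h)).symm
  have hk2 : z*v2 = x*v0 := by
    have h : (8*a*((x^2-t^2)*x^2)) * (x*v0 - z*v2) = 0 := by
      linear_combination x^3 * hR0 + (-(x^2*z)) * hR2 + (x^2*v0) * hE0 + (-(z^2*v2)) * hE2
        + (-4*c*z^3*v2 + 4*c*x^2*z*v2) * h01
        + (-4*c*z*t^2*v2 - 4*c*z^3*v2 - 8*c*x^2*t*v3 - 16*c*x^2*z*v2 - 8*c*x^2*y*v1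
           - 8*c*x^3*v0 - b*x*y*t*v2 - 4*a*z^3*v2 - 16*a*x^2*z*v2) * h02
        + (8*x^2*z*v2 - 8*x^3*v0) * hV
    exact (sub_eq_zero.mp (mzero hw h)).symm
  have hstar : (a+3*c)*(x*v0) + (a+c)*(t*v3) = 0 := by
    have h : ((x^2-t^2)*(x^2*t^2)) * (((a+3*c)*(x*v0) + (a+c)*(t*v3)) * 8) = 0 := by
      linear_combination (x^3*t^2) * hR0 + (x^2*t^2*v0) * hE0 + (-(x^2*t^3)) * hR3
        + (-(x^2*t^2*v3)) * hE3 + (8*x^2*t^3*v3 - 8*x^3*t^2*v0) * hV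
        + (8*c*x^2*t^4 - 8*c*x^4*t^2) * hk1 + (8*c*x^2*t^4 - 8*c*x^4*t^2) * hk2
    have h' := mzero (mul_ne_zero hxt (mul_ne_zero (pow_ne_zero 2 hx) (pow_ne_zero 2 ht))) h
    linear_combination h' / 8
  have hsf : (a+3*c)*x^2 + (a+c)*t^2 = 0 := by
    linear_combination hV + c * h01 + c * h02
  by_cases hac : a + c = 0
  · exfalso
    have hc : c ≠ 0 := fun h => ha (by linear_combination hac - h)
    have h : (2*c) * x^2 = 0 := by linear_combination hsf - x^2 * hac - t^2 * hac
    have := mzero (mul_ne_zero (by norm_num : (2:ℂ) ≠ 0) hc) h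
    exact hx ((pow_eq_zero_iff (two_ne_zero)).mp this)
  · have hG3 : x*v3 = t*v0 := by
      have h : (a+c) * (t^2*(x*v0) - x^2*(t*v3)) = 0 := by
        linear_combination (x*v0) * hsf + (-(x^2)) * hstar
      have h2 := mzero hac h
      have h3 : (x*t) * (x*v3 - t*v0) = 0 := by linear_combination (-1 : ℂ) * h2
      exact sub_eq_zero.mp (mzero (mul_ne_zero hx ht) h3)
    have hG1 : x*v1 = y*v0 := by
      have h : y * (x*v1 - y*v0) = 0 := by linear_combination x * hk1 + v0 * h01
      exact sub_eq_zero.mp (mzero hy h)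
    have hG2 : x*v2 = z*v0 := by
      have h : z * (x*v2 - z*v0) = 0 := by linear_combination x * hk2 + v0 * h02
      exact sub_eq_zero.mp (mzero hz h)
    exact wrapmu x y z t v0 v1 v2 v3 hx hG1 hG2 hG3

/-- n=4, squares pattern (α,α,β,β) with α ≠ β. -/
private lemma LD22 (a b c x y z t v0 v1 v2 v3 : ℂ) (ha : a ≠ 0)
    (h3p : ¬(a = -(2*c) ∧ b = 8*c)) (h3m : ¬(a = -(2*c) ∧ b = -(8*c)))
    (hx : x ≠ 0) (hy : y ≠ 0) (hz : z ≠ 0) (ht : t ≠ 0)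
    (h01 : x^2 = y^2) (h23 : z^2 = t^2) (h02 : x^2 ≠ z^2)
    (hE0 : 4*a*x^3 + b*(y*z*t) + 4*c*(x^2+y^2+z^2+t^2)*x = 0)
    (hE1 : 4*a*y^3 + b*(x*z*t) + 4*c*(x^2+y^2+z^2+t^2)*y = 0)
    (hE2 : 4*a*z^3 + b*(x*y*t) + 4*c*(x^2+y^2+z^2+t^2)*z = 0)
    (hE3 : 4*a*t^3 + b*(x*y*z) + 4*c*(x^2+y^2+z^2+t^2)*t = 0)
    (hR0 : (12*a*x^2 + 4*c*(x^2+y^2+z^2+t^2) + 8*c*x^2)*v0 + (b*(z*t) + 8*c*(x*y))*v1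
         + (b*(y*t) + 8*c*(x*z))*v2 + (b*(y*z) + 8*c*(x*t))*v3 = 0)
    (hR1 : (b*(z*t) + 8*c*(x*y))*v0 + (12*a*y^2 + 4*c*(x^2+y^2+z^2+t^2) + 8*c*y^2)*v1
         + (b*(x*t) + 8*c*(y*z))*v2 + (b*(x*z) + 8*c*(y*t))*v3 = 0)
    (hR2 : (b*(y*t) + 8*c*(x*z))*v0 + (b*(x*t) + 8*c*(y*z))*v1
         + (12*a*z^2 + 4*c*(x^2+y^2+z^2+t^2) + 8*c*z^2)*v2 + (b*(x*y) + 8*c*(z*t))*v3 = 0)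
    (hR3 : (b*(y*z) + 8*c*(x*t))*v0 + (b*(x*z) + 8*c*(y*t))*v1
         + (b*(x*y) + 8*c*(z*t))*v2 + (12*a*t^2 + 4*c*(x^2+y^2+z^2+t^2) + 8*c*t^2)*v3 = 0) :
    ∃ μ : ℂ, v0 = μ*x ∧ v1 = μ*y ∧ v2 = μ*z ∧ v3 = μ*t := by
  have hxz : x^2 - z^2 ≠ 0 := sub_ne_zero.mpr h02
  have hV : a*(x^2+z^2) + c*(x^2+y^2+z^2+t^2) = 0 := by
    have h : (x^2 - z^2) * ((a*(x^2+z^2) + c*(x^2+y^2+z^2+t^2)) * 4) = 0 := by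
      linear_combination x * hE0 + (-z) * hE2
    have h' := mzero hxz h
    linear_combination h' / 4
  have hk1 : y*v1 = x*v0 := by
    have h : (8*a*((x^2-z^2)*x^2)) * (x*v0 - y*v1) = 0 := by
      linear_combination x^3 * hR0 + (-(x^2*y)) * hR1 + (x^2*v0) * hE0 + (-(y^2*v1)) * hE1
        + (-4*c*y*t^2*v1 - 4*c*y*z^2*v1 - 4*c*y^3*v1 - 8*c*x^2*t*v3 - 8*c*x^2*z*v2
           - 12*c*x^2*y*v1 - 8*c*x^3*v0 - b*x*z*t*v1 - 4*a*y^3*v1 - 16*a*x^2*y*v1) * h01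
        + (8*x^2*y*v1 - 8*x^3*v0) * hV
    exact (sub_eq_zero.mp (mzero (mul_ne_zero (mul_ne_zero (by norm_num) ha)
      (mul_ne_zero hxz (pow_ne_zero 2 hx))) h)).symm
  have hk2 : t*v3 = z*v2 := by
    have h : (8*a*((x^2-z^2)*z^2)) * (z*v2 - t*v3) = 0 := by
      linear_combination (-(z^3)) * hR2 + (z^2*t) * hR3 + (-(z^2*v2)) * hE2 + (t^2*v3) * hE3
        + (4*c*t^3*v3 - 4*c*z^2*t*v3) * h01
        + (4*c*t^3*v3 + 12*c*z^2*t*v3 + 8*c*z^3*v2 + 8*c*y*z^2*v1 + 8*c*x*z^2*v0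
           + 8*c*x^2*t*v3 + b*x*y*z*v3 + 4*a*t^3*v3 + 16*a*z^2*t*v3) * h23
        + (-8*z^2*t*v3 + 8*z^3*v2) * hV
    exact (sub_eq_zero.mp (mzero (mul_ne_zero (mul_ne_zero (by norm_num) ha)
      (mul_ne_zero hxz (pow_ne_zero 2 hz))) h)).symm
  by_cases h2c : a + 2*c = 0
  · exfalso
    have ha2c : a = -(2*c) := by linear_combination h2c
    have hbq : b*(x*y*z*t) - 4*a*x^2*z^2 = 0 := by
      linear_combination x * hE0 + (-4*x^2) * hV
    have hb2 : (x^4*z^4) * ((b - 8*c) * (b + 8*c)) = 0 := by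
      linear_combination (b*x*y*z*t + 4*a*x^2*z^2) * hbq + (b^2*x^2*z^2*t^2) * h01
        + (b^2*x^4*z^2) * h23 + (-32*c*x^4*z^4 + 16*a*x^4*z^4) * ha2c
    have h := mzero (mul_ne_zero (pow_ne_zero 4 hx) (pow_ne_zero 4 hz)) hb2
    rcases mul_eq_zero.mp h with h' | h'
    · exact h3p ⟨ha2c, by linear_combination h'⟩
    · exact h3m ⟨ha2c, by linear_combination h'⟩
  · have hvv : x*v0 + z*v2 = 0 := by
      have h : ((x^2-z^2)*(x^2*z^2)*(a+2*c)) * ((x*v0 + z*v2) * 8) = 0 := by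
        linear_combination (x^3*z^2) * hR0 + (x^2*z^2*v0) * hE0 + (-(x^2*z^3)) * hR2
          + (-(x^2*z^2*v2)) * hE2 + (8*x^2*z^3*v2 - 8*x^3*z^2*v0) * hV
          + (8*c*x^2*z^4 - 8*c*x^4*z^2) * hk1 + (8*c*x^2*z^4 - 8*c*x^4*z^2) * hk2
      have h' := mzero (mul_ne_zero (mul_ne_zero hxz
        (mul_ne_zero (pow_ne_zero 2 hx) (pow_ne_zero 2 hz))) h2c) h
      linear_combination h' / 8
    have hxz0 : x^2 + z^2 = 0 := by
      have h : (a+2*c) * (x^2+z^2) = 0 := by linear_combination hV + c * h01 + c * h23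
      exact mzero h2c h
    have hG1 : x*v1 = y*v0 := by
      have h : y * (x*v1 - y*v0) = 0 := by linear_combination x * hk1 + v0 * h01
      exact sub_eq_zero.mp (mzero hy h)
    have hG2 : x*v2 = z*v0 := by
      have h : z * (x*v2 - z*v0) = 0 := by linear_combination (-v0) * hxz0 + x * hvv
      exact sub_eq_zero.mp (mzero hz h)
    have htv : t*v3 + x*v0 = 0 := by linear_combination hk2 + hvv
    have hG3 : x*v3 = t*v0 := by
      have h : t * (x*v3 - t*v0) = 0 := by
        linear_combination x * htv + (-v0) * hxz0 + v0 * h23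
      exact sub_eq_zero.mp (mzero ht h)
    exact wrapmu x y z t v0 v1 v2 v3 hx hG1 hG2 hG3
/-- If two squares differ, `a ≠ 0` (all coordinates nonzero). -/
private lemma Lanz (a b c x y z t : ℂ)
    (h1 : ¬(a = 0 ∧ b = 0))
    (hx : x ≠ 0) (hy : y ≠ 0) (hz : z ≠ 0) (ht : t ≠ 0)
    (hne : x^2 ≠ y^2)
    (hE0 : 4*a*x^3 + b*(y*z*t) + 4*c*(x^2+y^2+z^2+t^2)*x = 0)
    (hE1 : 4*a*y^3 + b*(x*z*t) + 4*c*(x^2+y^2+z^2+t^2)*y = 0) : a ≠ 0 := by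
  intro ha
  subst ha
  have hcs : c*(x^2+y^2+z^2+t^2) = 0 := by
    have h : (4*(x^2-y^2)) * (c*(x^2+y^2+z^2+t^2)) = 0 := by
      linear_combination x * hE0 + (-y) * hE1
    exact mzero (mul_ne_zero (by norm_num) (sub_ne_zero.mpr hne)) h
  have hbq : b*(x*y*z*t) = 0 := by
    linear_combination x * hE0 + (-4*x^2) * hcs
  have hb : b = 0 := by
    rcases mul_eq_zero.mp hbq with h | h
    · exact h
    · exact absurd h (mul_ne_zero (mul_ne_zero (mul_ne_zero hx hy) hz) ht)
  exact h1 ⟨rfl, hb⟩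

/-- Three pairwise distinct squares are impossible. -/
private lemma Ltri (a b c x y z t : ℂ) (ha : a ≠ 0)
    (h01 : x^2 ≠ y^2) (h02 : x^2 ≠ z^2) (h12 : y^2 ≠ z^2)
    (hE0 : 4*a*x^3 + b*(y*z*t) + 4*c*(x^2+y^2+z^2+t^2)*x = 0)
    (hE1 : 4*a*y^3 + b*(x*z*t) + 4*c*(x^2+y^2+z^2+t^2)*y = 0)
    (hE2 : 4*a*z^3 + b*(x*y*t) + 4*c*(x^2+y^2+z^2+t^2)*z = 0) : False := by
  have hV1 : a*(x^2+y^2) + c*(x^2+y^2+z^2+t^2) = 0 := by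
    have h : (x^2 - y^2) * ((a*(x^2+y^2) + c*(x^2+y^2+z^2+t^2)) * 4) = 0 := by
      linear_combination x * hE0 + (-y) * hE1
    have h' := mzero (sub_ne_zero.mpr h01) h
    linear_combination h' / 4
  have hV2 : a*(x^2+z^2) + c*(x^2+y^2+z^2+t^2) = 0 := by
    have h : (x^2 - z^2) * ((a*(x^2+z^2) + c*(x^2+y^2+z^2+t^2)) * 4) = 0 := by
      linear_combination x * hE0 + (-z) * hE2
    have h' := mzero (sub_ne_zero.mpr h02) h
    linear_combination h' / 4
  have h : a * (y^2 - z^2) = 0 := by linear_combination hV1 - hV2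
  exact h12 (sub_eq_zero.mp (mzero ha h))

/-- n=4 dispatcher. -/
private lemma LDmain (a b c x y z t v0 v1 v2 v3 : ℂ)
    (h1 : ¬(a = 0 ∧ b = 0)) (h2 : ¬(a = 0 ∧ c = 0))
    (h3p : ¬(a = -(2*c) ∧ b = 8*c)) (h3m : ¬(a = -(2*c) ∧ b = -(8*c)))
    (hx : x ≠ 0) (hy : y ≠ 0) (hz : z ≠ 0) (ht : t ≠ 0)
    (hE0 : 4*a*x^3 + b*(y*z*t) + 4*c*(x^2+y^2+z^2+t^2)*x = 0)
    (hE1 : 4*a*y^3 + b*(x*z*t) + 4*c*(x^2+y^2+z^2+t^2)*y = 0)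
    (hE2 : 4*a*z^3 + b*(x*y*t) + 4*c*(x^2+y^2+z^2+t^2)*z = 0)
    (hE3 : 4*a*t^3 + b*(x*y*z) + 4*c*(x^2+y^2+z^2+t^2)*t = 0)
    (hR0 : (12*a*x^2 + 4*c*(x^2+y^2+z^2+t^2) + 8*c*x^2)*v0 + (b*(z*t) + 8*c*(x*y))*v1
         + (b*(y*t) + 8*c*(x*z))*v2 + (b*(y*z) + 8*c*(x*t))*v3 = 0)
    (hR1 : (b*(z*t) + 8*c*(x*y))*v0 + (12*a*y^2 + 4*c*(x^2+y^2+z^2+t^2) + 8*c*y^2)*v1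
         + (b*(x*t) + 8*c*(y*z))*v2 + (b*(x*z) + 8*c*(y*t))*v3 = 0)
    (hR2 : (b*(y*t) + 8*c*(x*z))*v0 + (b*(x*t) + 8*c*(y*z))*v1
         + (12*a*z^2 + 4*c*(x^2+y^2+z^2+t^2) + 8*c*z^2)*v2 + (b*(x*y) + 8*c*(z*t))*v3 = 0)
    (hR3 : (b*(y*z) + 8*c*(x*t))*v0 + (b*(x*z) + 8*c*(y*t))*v1
         + (b*(x*y) + 8*c*(z*t))*v2 + (12*a*t^2 + 4*c*(x^2+y^2+z^2+t^2) + 8*c*t^2)*v3 = 0) :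
    ∃ μ : ℂ, v0 = μ*x ∧ v1 = μ*y ∧ v2 = μ*z ∧ v3 = μ*t := by
  by_cases h01 : x^2 = y^2
  · by_cases h23 : z^2 = t^2
    · by_cases h02 : x^2 = z^2
      · exact LDeq a b c x y z t v0 v1 v2 v3 h3p h3m hx hy hz ht h01 h02 (h02.trans h23)
          hE0 hE1 hE2 hE3 hR0 hR1 hR2 hR3
      · have ha : a ≠ 0 := Lanz a b c x z y t h1 hx hz hy ht h02
          (by linear_combination hE0) (by linear_combination hE2)
        exact LD22 a b c x y z t v0 v1 v2 v3 ha h3p h3m hx hy hz ht h01 h23 h02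
          hE0 hE1 hE2 hE3 hR0 hR1 hR2 hR3
    · have ha : a ≠ 0 := Lanz a b c z t x y h1 hz ht hx hy h23
        (by linear_combination hE2) (by linear_combination hE3)
      by_cases h02 : x^2 = z^2
      · have h03 : x^2 ≠ t^2 := fun h => h23 (by rw [← h02, h])
        exact LD31 a b c x y z t v0 v1 v2 v3 ha hx hy hz ht h01 h02 h03
          hE0 hE1 hE2 hE3 hR0 hR1 hR2 hR3
      · by_cases h03 : x^2 = t^2
        · obtain ⟨μ, g0, g1, g3, g2⟩ := LD31 a b c x y t z v0 v1 v3 v2 ha hx hy ht hz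
            h01 h03 h02
            (by linear_combination hE0) (by linear_combination hE1)
            (by linear_combination hE3) (by linear_combination hE2)
            (by linear_combination hR0) (by linear_combination hR1)
            (by linear_combination hR3) (by linear_combination hR2)
          exact ⟨μ, g0, g1, g2, g3⟩
        · exact absurd (Ltri a b c x z t y ha h02 h03 h23
            (by linear_combination hE0) (by linear_combination hE2)
            (by linear_combination hE3)) (fun h => h)
  · have ha : a ≠ 0 := Lanz a b c x y z t h1 hx hy hz ht h01 hE0 hE1
    by_cases h23 : z^2 = t^2
    · by_cases h12 : y^2 = z^2
      · obtain ⟨μ, g1, g2, g3, g0⟩ := LD31 a b c y z t x v1 v2 v3 v0 ha hy hz ht hx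
          h12 (h12.trans h23) (fun h => h01 h.symm)
          (by linear_combination hE1) (by linear_combination hE2)
          (by linear_combination hE3) (by linear_combination hE0)
          (by linear_combination hR1) (by linear_combination hR2)
          (by linear_combination hR3) (by linear_combination hR0)
        exact ⟨μ, g0, g1, g2, g3⟩
      · by_cases h02 : x^2 = z^2
        · obtain ⟨μ, g0, g2, g3, g1⟩ := LD31 a b c x z t y v0 v2 v3 v1 ha hx hz ht hy
            h02 (h02.trans h23) h01
            (by linear_combination hE0) (by linear_combination hE2)
            (by linear_combination hE3) (by linear_combination hE1)
            (by linear_combination hR0) (by linear_combination hR2)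
            (by linear_combination hR3) (by linear_combination hR1)
          exact ⟨μ, g0, g1, g2, g3⟩
        · exact absurd (Ltri a b c x y z t ha h01 h02 h12 hE0 hE1 hE2) (fun h => h)
    · by_cases h12 : y^2 = z^2
      · by_cases h03 : x^2 = t^2
        · obtain ⟨μ, g0, g3, g1, g2⟩ := LD22 a b c x t y z v0 v3 v1 v2 ha h3p h3m
            hx ht hy hz h03 h12 h01
            (by linear_combination hE0) (by linear_combination hE3)
            (by linear_combination hE1) (by linear_combination hE2)
            (by linear_combination hR0) (by linear_combination hR3)
            (by linear_combination hR1) (by linear_combination hR2)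
          exact ⟨μ, g0, g1, g2, g3⟩
        · have h02 : x^2 ≠ z^2 := fun h => h01 (h.trans h12.symm)
          exact absurd (Ltri a b c x z t y ha h02 h03 h23
            (by linear_combination hE0) (by linear_combination hE2)
            (by linear_combination hE3)) (fun h => h)
      · by_cases h13 : y^2 = t^2
        · by_cases h02 : x^2 = z^2
          · obtain ⟨μ, g0, g2, g1, g3⟩ := LD22 a b c x z y t v0 v2 v1 v3 ha h3p h3m
              hx hz hy ht h02 h13 h01
              (by linear_combination hE0) (by linear_combination hE2)
              (by linear_combination hE1) (by linear_combination hE3)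
              (by linear_combination hR0) (by linear_combination hR2)
              (by linear_combination hR1) (by linear_combination hR3)
            exact ⟨μ, g0, g1, g2, g3⟩
          · exact absurd (Ltri a b c x y z t ha h01 h02 h12 hE0 hE1 hE2) (fun h => h)
        · exact absurd (Ltri a b c y z t x ha h12 h13 h23
            (by linear_combination hE1) (by linear_combination hE2)
            (by linear_combination hE3)) (fun h => h)
/-- Kernel description : any singular-Hessian kernel vector is a multiple of the point. -/
private lemma LKER (a b c x y z t v0 v1 v2 v3 : ℂ)
    (h1 : ¬(a = 0 ∧ b = 0)) (h2 : ¬(a = 0 ∧ c = 0))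
    (h3p : ¬(a = -(2*c) ∧ b = 8*c)) (h3m : ¬(a = -(2*c) ∧ b = -(8*c)))
    (hp : ¬(x = 0 ∧ y = 0 ∧ z = 0 ∧ t = 0))
    (hE0 : 4*a*x^3 + b*(y*z*t) + 4*c*(x^2+y^2+z^2+t^2)*x = 0)
    (hE1 : 4*a*y^3 + b*(x*z*t) + 4*c*(x^2+y^2+z^2+t^2)*y = 0)
    (hE2 : 4*a*z^3 + b*(x*y*t) + 4*c*(x^2+y^2+z^2+t^2)*z = 0)
    (hE3 : 4*a*t^3 + b*(x*y*z) + 4*c*(x^2+y^2+z^2+t^2)*t = 0)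
    (hR0 : (12*a*x^2 + 4*c*(x^2+y^2+z^2+t^2) + 8*c*x^2)*v0 + (b*(z*t) + 8*c*(x*y))*v1
         + (b*(y*t) + 8*c*(x*z))*v2 + (b*(y*z) + 8*c*(x*t))*v3 = 0)
    (hR1 : (b*(z*t) + 8*c*(x*y))*v0 + (12*a*y^2 + 4*c*(x^2+y^2+z^2+t^2) + 8*c*y^2)*v1
         + (b*(x*t) + 8*c*(y*z))*v2 + (b*(x*z) + 8*c*(y*t))*v3 = 0)
    (hR2 : (b*(y*t) + 8*c*(x*z))*v0 + (b*(x*t) + 8*c*(y*z))*v1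
         + (12*a*z^2 + 4*c*(x^2+y^2+z^2+t^2) + 8*c*z^2)*v2 + (b*(x*y) + 8*c*(z*t))*v3 = 0)
    (hR3 : (b*(y*z) + 8*c*(x*t))*v0 + (b*(x*z) + 8*c*(y*t))*v1
         + (b*(x*y) + 8*c*(z*t))*v2 + (12*a*t^2 + 4*c*(x^2+y^2+z^2+t^2) + 8*c*t^2)*v3 = 0) :
    ∃ μ : ℂ, v0 = μ*x ∧ v1 = μ*y ∧ v2 = μ*z ∧ v3 = μ*t := by
  by_cases hx : x = 0
  · by_cases hy : y = 0
    · by_cases hz : z = 0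
      · by_cases ht : t = 0
        · exact absurd ⟨hx, hy, hz, ht⟩ hp
        · subst hx; subst hy; subst hz
          obtain ⟨μ, g3, g0, g1, g2⟩ := LA a b c t v3 v0 v1 v2 h2 ht
            (by linear_combination hE3) (by linear_combination hR0)
            (by linear_combination hR1) (by linear_combination hR2)
          exact ⟨μ, g0, g1, g2, g3⟩
      · by_cases ht : t = 0
        · subst hx; subst hy; subst ht
          obtain ⟨μ, g2, g0, g1, g3⟩ := LA a b c z v2 v0 v1 v3 h2 hz
            (by linear_combination hE2) (by linear_combination hR0)
            (by linear_combination hR1) (by linear_combination hR3)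
          exact ⟨μ, g0, g1, g2, g3⟩
        · subst hx; subst hy
          obtain ⟨μ, g2, g3, g0, g1⟩ := LB a b c z t v2 v3 v0 v1 h1 h2 h3p h3m hz ht
            (by linear_combination hE2) (by linear_combination hE3)
            (by linear_combination hR2) (by linear_combination hR3)
            (by linear_combination hR0) (by linear_combination hR1)
          exact ⟨μ, g0, g1, g2, g3⟩
    · by_cases hz : z = 0
      · by_cases ht : t = 0
        · subst hx; subst hz; subst ht
          obtain ⟨μ, g1, g0, g2, g3⟩ := LA a b c y v1 v0 v2 v3 h2 hy
            (by linear_combination hE1) (by linear_combination hR0)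
            (by linear_combination hR2) (by linear_combination hR3)
          exact ⟨μ, g0, g1, g2, g3⟩
        · subst hx; subst hz
          obtain ⟨μ, g1, g3, g0, g2⟩ := LB a b c y t v1 v3 v0 v2 h1 h2 h3p h3m hy ht
            (by linear_combination hE1) (by linear_combination hE3)
            (by linear_combination hR1) (by linear_combination hR3)
            (by linear_combination hR0) (by linear_combination hR2)
          exact ⟨μ, g0, g1, g2, g3⟩
      · by_cases ht : t = 0
        · subst hx; subst ht
          obtain ⟨μ, g1, g2, g0, g3⟩ := LB a b c y z v1 v2 v0 v3 h1 h2 h3p h3m hy hz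
            (by linear_combination hE1) (by linear_combination hE2)
            (by linear_combination hR1) (by linear_combination hR2)
            (by linear_combination hR0) (by linear_combination hR3)
          exact ⟨μ, g0, g1, g2, g3⟩
        · subst hx
          obtain ⟨μ, g1, g2, g3, g0⟩ := LC a b c y z t v1 v2 v3 v0 h1 h2 hy hz ht
            (by linear_combination hE1) (by linear_combination hE2)
            (by linear_combination hE3) (by linear_combination hE0)
            (by linear_combination hR1) (by linear_combination hR2)
            (by linear_combination hR3) (by linear_combination hR0)
          exact ⟨μ, g0, g1, g2, g3⟩
  · by_cases hy : y = 0
    · by_cases hz : z = 0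
      · by_cases ht : t = 0
        · subst hy; subst hz; subst ht
          obtain ⟨μ, g0, g1, g2, g3⟩ := LA a b c x v0 v1 v2 v3 h2 hx
            (by linear_combination hE0) (by linear_combination hR1)
            (by linear_combination hR2) (by linear_combination hR3)
          exact ⟨μ, g0, g1, g2, g3⟩
        · subst hy; subst hz
          obtain ⟨μ, g0, g3, g1, g2⟩ := LB a b c x t v0 v3 v1 v2 h1 h2 h3p h3m hx ht
            (by linear_combination hE0) (by linear_combination hE3)
            (by linear_combination hR0) (by linear_combination hR3)
            (by linear_combination hR1) (by linear_combination hR2)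
          exact ⟨μ, g0, g1, g2, g3⟩
      · by_cases ht : t = 0
        · subst hy; subst ht
          obtain ⟨μ, g0, g2, g1, g3⟩ := LB a b c x z v0 v2 v1 v3 h1 h2 h3p h3m hx hz
            (by linear_combination hE0) (by linear_combination hE2)
            (by linear_combination hR0) (by linear_combination hR2)
            (by linear_combination hR1) (by linear_combination hR3)
          exact ⟨μ, g0, g1, g2, g3⟩
        · subst hy
          obtain ⟨μ, g0, g2, g3, g1⟩ := LC a b c x z t v0 v2 v3 v1 h1 h2 hx hz ht
            (by linear_combination hE0) (by linear_combination hE2)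
            (by linear_combination hE3) (by linear_combination hE1)
            (by linear_combination hR0) (by linear_combination hR2)
            (by linear_combination hR3) (by linear_combination hR1)
          exact ⟨μ, g0, g1, g2, g3⟩
    · by_cases hz : z = 0
      · by_cases ht : t = 0
        · subst hz; subst ht
          obtain ⟨μ, g0, g1, g2, g3⟩ := LB a b c x y v0 v1 v2 v3 h1 h2 h3p h3m hx hy
            (by linear_combination hE0) (by linear_combination hE1)
            (by linear_combination hR0) (by linear_combination hR1)
            (by linear_combination hR2) (by linear_combination hR3)
          exact ⟨μ, g0, g1, g2, g3⟩
        · subst hz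
          obtain ⟨μ, g0, g1, g3, g2⟩ := LC a b c x y t v0 v1 v3 v2 h1 h2 hx hy ht
            (by linear_combination hE0) (by linear_combination hE1)
            (by linear_combination hE3) (by linear_combination hE2)
            (by linear_combination hR0) (by linear_combination hR1)
            (by linear_combination hR3) (by linear_combination hR2)
          exact ⟨μ, g0, g1, g2, g3⟩
      · by_cases ht : t = 0
        · subst ht
          obtain ⟨μ, g0, g1, g2, g3⟩ := LC a b c x y z v0 v1 v2 v3 h1 h2 hx hy hz
            (by linear_combination hE0) (by linear_combination hE1)
            (by linear_combination hE2) (by linear_combination hE3)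
            (by linear_combination hR0) (by linear_combination hR1)
            (by linear_combination hR2) (by linear_combination hR3)
          exact ⟨μ, g0, g1, g2, g3⟩
        · exact LDmain a b c x y z t v0 v1 v2 v3 h1 h2 h3p h3m hx hy hz ht
            hE0 hE1 hE2 hE3 hR0 hR1 hR2 hR3
private lemma notUnit0 (g : MvPolynomial (Fin 4) ℂ)
    (hg : MvPolynomial.eval (fun _ => (0:ℂ)) g = 0) : ¬ IsUnit g := fun hu => by
  have h := hu.map (MvPolynomial.eval (fun _ => (0:ℂ)))
  rw [hg] at h
  exact h.ne_zero rfl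

set_option maxHeartbeats 4000000 in
theorem stmt_14 (a b c : ℂ)
    (F : MvPolynomial (Fin 4) ℂ)
    (hF : F = C a * (∑ i : Fin 4, X i ^ 4) + C b * (∏ i : Fin 4, X i)
            + C c * (∑ i : Fin 4, X i ^ 2) ^ 2)
    (hirr : Irreducible F) :
    ∀ p : Fin 4 → ℂ, p ≠ 0 → MvPolynomial.eval p F = 0 →
      (∀ i, MvPolynomial.eval p (pderiv i F) = 0) →
      (Matrix.of fun i j : Fin 4 =>
        MvPolynomial.eval p (pderiv i (pderiv j F))).rank = 3 := by
  intro p hp hF0 hDer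
  -- consequences of irreducibility
  have h1 : ¬(a = 0 ∧ b = 0) := by
    rintro ⟨rfl, rfl⟩
    have hfac : F = (C c * (X 0^2 + X 1^2 + X 2^2 + X 3^2)) *
        (X 0^2 + X 1^2 + X 2^2 + X 3^2) := by
      rw [hF]
      simp only [Fin.sum_univ_four, Fin.prod_univ_four, map_zero]
      ring
    rcases hirr.isUnit_or_isUnit hfac with h | h
    · exact notUnit0 _ (by simp) h
    · exact notUnit0 _ (by simp) h
  have h2 : ¬(a = 0 ∧ c = 0) := by
    rintro ⟨rfl, rfl⟩
    have hfac : F = (C b * X 0) * (X 1 * (X 2 * X 3)) := by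
      rw [hF]
      simp only [Fin.sum_univ_four, Fin.prod_univ_four, map_zero]
      ring
    rcases hirr.isUnit_or_isUnit hfac with h | h
    · exact notUnit0 _ (by simp) h
    · exact notUnit0 _ (by simp) h
  have h3p : ¬(a = -(2*c) ∧ b = 8*c) := by
    rintro ⟨ha, hb⟩
    have hfac : F = (C c * ((2*X 0*X 1 + 2*X 2*X 3) + (X 0^2 + X 1^2 - X 2^2 - X 3^2))) *
        ((2*X 0*X 1 + 2*X 2*X 3) - (X 0^2 + X 1^2 - X 2^2 - X 3^2)) := by
      rw [hF, ha, hb]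
      simp only [Fin.sum_univ_four, Fin.prod_univ_four, map_neg, C_mul, map_ofNat]
      ring
    rcases hirr.isUnit_or_isUnit hfac with h | h
    · exact notUnit0 _ (by simp) h
    · exact notUnit0 _ (by simp) h
  have h3m : ¬(a = -(2*c) ∧ b = -(8*c)) := by
    rintro ⟨ha, hb⟩
    have hfac : F = (C c * ((2*X 0*X 1 - 2*X 2*X 3) + (X 0^2 + X 1^2 - X 2^2 - X 3^2))) *
        ((2*X 0*X 1 - 2*X 2*X 3) - (X 0^2 + X 1^2 - X 2^2 - X 3^2)) := by
      rw [hF, ha, hb]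
      simp only [Fin.sum_univ_four, Fin.prod_univ_four, map_neg, C_mul, map_ofNat]
      ring
    rcases hirr.isUnit_or_isUnit hfac with h | h
    · exact notUnit0 _ (by simp) h
    · exact notUnit0 _ (by simp) h
  -- scalar first derivative equations
  have hE0 : 4*a*(p 0)^3 + b*((p 1)*(p 2)*(p 3))
      + 4*c*((p 0)^2+(p 1)^2+(p 2)^2+(p 3)^2)*(p 0) = 0 := by
    have h := hDer 0
    rw [hF] at h
    simp only [Fin.sum_univ_four, Fin.prod_univ_four] at h
    simp [pderiv_mul, pderiv_pow, pderiv_X, Pi.single_apply, pd4, pd2, pd3] at h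
    linear_combination h
  have hE1 : 4*a*(p 1)^3 + b*((p 0)*(p 2)*(p 3))
      + 4*c*((p 0)^2+(p 1)^2+(p 2)^2+(p 3)^2)*(p 1) = 0 := by
    have h := hDer 1
    rw [hF] at h
    simp only [Fin.sum_univ_four, Fin.prod_univ_four] at h
    simp [pderiv_mul, pderiv_pow, pderiv_X, Pi.single_apply, pd4, pd2, pd3] at h
    linear_combination h
  have hE2 : 4*a*(p 2)^3 + b*((p 0)*(p 1)*(p 3))
      + 4*c*((p 0)^2+(p 1)^2+(p 2)^2+(p 3)^2)*(p 2) = 0 := by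
    have h := hDer 2
    rw [hF] at h
    simp only [Fin.sum_univ_four, Fin.prod_univ_four] at h
    simp [pderiv_mul, pderiv_pow, pderiv_X, Pi.single_apply, pd4, pd2, pd3] at h
    linear_combination h
  have hE3 : 4*a*(p 3)^3 + b*((p 0)*(p 1)*(p 2))
      + 4*c*((p 0)^2+(p 1)^2+(p 2)^2+(p 3)^2)*(p 3) = 0 := by
    have h := hDer 3
    rw [hF] at h
    simp only [Fin.sum_univ_four, Fin.prod_univ_four] at h
    simp [pderiv_mul, pderiv_pow, pderiv_X, Pi.single_apply, pd4, pd2, pd3] at h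
    linear_combination h
  have e00 : MvPolynomial.eval p (pderiv 0 (pderiv 0 F)) = 12*a*(p 0)^2 + 4*c*((p 0)^2+(p 1)^2+(p 2)^2+(p 3)^2) + 8*c*(p 0)^2 := by
    rw [hF]
    simp [Fin.sum_univ_four, Fin.prod_univ_four, pderiv_mul, pderiv_pow, pderiv_X,
      Pi.single_apply, pd4, pd2, pd3]
    ring
  have e01 : MvPolynomial.eval p (pderiv 0 (pderiv 1 F)) = b*((p 2)*(p 3)) + 8*c*((p 0)*(p 1)) := by
    rw [hF]
    simp [Fin.sum_univ_four, Fin.prod_univ_four, pderiv_mul, pderiv_pow, pderiv_X,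
      Pi.single_apply, pd4, pd2, pd3]
    ring
  have e02 : MvPolynomial.eval p (pderiv 0 (pderiv 2 F)) = b*((p 1)*(p 3)) + 8*c*((p 0)*(p 2)) := by
    rw [hF]
    simp [Fin.sum_univ_four, Fin.prod_univ_four, pderiv_mul, pderiv_pow, pderiv_X,
      Pi.single_apply, pd4, pd2, pd3]
    ring
  have e03 : MvPolynomial.eval p (pderiv 0 (pderiv 3 F)) = b*((p 1)*(p 2)) + 8*c*((p 0)*(p 3)) := by
    rw [hF]
    simp [Fin.sum_univ_four, Fin.prod_univ_four, pderiv_mul, pderiv_pow, pderiv_X,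
      Pi.single_apply, pd4, pd2, pd3]
    ring
  have e10 : MvPolynomial.eval p (pderiv 1 (pderiv 0 F)) = b*((p 2)*(p 3)) + 8*c*((p 1)*(p 0)) := by
    rw [hF]
    simp [Fin.sum_univ_four, Fin.prod_univ_four, pderiv_mul, pderiv_pow, pderiv_X,
      Pi.single_apply, pd4, pd2, pd3]
    ring
  have e11 : MvPolynomial.eval p (pderiv 1 (pderiv 1 F)) = 12*a*(p 1)^2 + 4*c*((p 0)^2+(p 1)^2+(p 2)^2+(p 3)^2) + 8*c*(p 1)^2 := by
    rw [hF]
    simp [Fin.sum_univ_four, Fin.prod_univ_four, pderiv_mul, pderiv_pow, pderiv_X,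
      Pi.single_apply, pd4, pd2, pd3]
    ring
  have e12 : MvPolynomial.eval p (pderiv 1 (pderiv 2 F)) = b*((p 0)*(p 3)) + 8*c*((p 1)*(p 2)) := by
    rw [hF]
    simp [Fin.sum_univ_four, Fin.prod_univ_four, pderiv_mul, pderiv_pow, pderiv_X,
      Pi.single_apply, pd4, pd2, pd3]
    ring
  have e13 : MvPolynomial.eval p (pderiv 1 (pderiv 3 F)) = b*((p 0)*(p 2)) + 8*c*((p 1)*(p 3)) := by
    rw [hF]
    simp [Fin.sum_univ_four, Fin.prod_univ_four, pderiv_mul, pderiv_pow, pderiv_X,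
      Pi.single_apply, pd4, pd2, pd3]
    ring
  have e20 : MvPolynomial.eval p (pderiv 2 (pderiv 0 F)) = b*((p 1)*(p 3)) + 8*c*((p 2)*(p 0)) := by
    rw [hF]
    simp [Fin.sum_univ_four, Fin.prod_univ_four, pderiv_mul, pderiv_pow, pderiv_X,
      Pi.single_apply, pd4, pd2, pd3]
    ring
  have e21 : MvPolynomial.eval p (pderiv 2 (pderiv 1 F)) = b*((p 0)*(p 3)) + 8*c*((p 2)*(p 1)) := by
    rw [hF]
    simp [Fin.sum_univ_four, Fin.prod_univ_four, pderiv_mul, pderiv_pow, pderiv_X,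
      Pi.single_apply, pd4, pd2, pd3]
    ring
  have e22 : MvPolynomial.eval p (pderiv 2 (pderiv 2 F)) = 12*a*(p 2)^2 + 4*c*((p 0)^2+(p 1)^2+(p 2)^2+(p 3)^2) + 8*c*(p 2)^2 := by
    rw [hF]
    simp [Fin.sum_univ_four, Fin.prod_univ_four, pderiv_mul, pderiv_pow, pderiv_X,
      Pi.single_apply, pd4, pd2, pd3]
    ring
  have e23 : MvPolynomial.eval p (pderiv 2 (pderiv 3 F)) = b*((p 0)*(p 1)) + 8*c*((p 2)*(p 3)) := by
    rw [hF]
    simp [Fin.sum_univ_four, Fin.prod_univ_four, pderiv_mul, pderiv_pow, pderiv_X,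
      Pi.single_apply, pd4, pd2, pd3]
    ring
  have e30 : MvPolynomial.eval p (pderiv 3 (pderiv 0 F)) = b*((p 1)*(p 2)) + 8*c*((p 3)*(p 0)) := by
    rw [hF]
    simp [Fin.sum_univ_four, Fin.prod_univ_four, pderiv_mul, pderiv_pow, pderiv_X,
      Pi.single_apply, pd4, pd2, pd3]
    ring
  have e31 : MvPolynomial.eval p (pderiv 3 (pderiv 1 F)) = b*((p 0)*(p 2)) + 8*c*((p 3)*(p 1)) := by
    rw [hF]
    simp [Fin.sum_univ_four, Fin.prod_univ_four, pderiv_mul, pderiv_pow, pderiv_X,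
      Pi.single_apply, pd4, pd2, pd3]
    ring
  have e32 : MvPolynomial.eval p (pderiv 3 (pderiv 2 F)) = b*((p 0)*(p 1)) + 8*c*((p 3)*(p 2)) := by
    rw [hF]
    simp [Fin.sum_univ_four, Fin.prod_univ_four, pderiv_mul, pderiv_pow, pderiv_X,
      Pi.single_apply, pd4, pd2, pd3]
    ring
  have e33 : MvPolynomial.eval p (pderiv 3 (pderiv 3 F)) = 12*a*(p 3)^2 + 4*c*((p 0)^2+(p 1)^2+(p 2)^2+(p 3)^2) + 8*c*(p 3)^2 := by
    rw [hF]
    simp [Fin.sum_univ_four, Fin.prod_univ_four, pderiv_mul, pderiv_pow, pderiv_X,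
      Pi.single_apply, pd4, pd2, pd3]
    ring
  set M : Matrix (Fin 4) (Fin 4) ℂ :=
    Matrix.of fun i j : Fin 4 => MvPolynomial.eval p (pderiv i (pderiv j F)) with hM
  have hp4 : ¬(p 0 = 0 ∧ p 1 = 0 ∧ p 2 = 0 ∧ p 3 = 0) := by
    rintro ⟨g0, g1, g2, g3⟩
    apply hp
    funext i
    fin_cases i
    · exact g0
    · exact g1
    · exact g2
    · exact g3
  have hker : LinearMap.ker (M.mulVecLin) = Submodule.span ℂ {p} := by
    apply le_antisymm
    · rintro v hv
      rw [LinearMap.mem_ker, Matrix.mulVecLin_apply] at hv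
      have hr0 := congrFun hv 0
      have hr1 := congrFun hv 1
      have hr2 := congrFun hv 2
      have hr3 := congrFun hv 3
      simp only [hM, Matrix.mulVec, dotProduct, Fin.sum_univ_four, Matrix.of_apply,
        Pi.zero_apply] at hr0 hr1 hr2 hr3
      rw [e00, e01, e02, e03] at hr0
      rw [e10, e11, e12, e13] at hr1
      rw [e20, e21, e22, e23] at hr2
      rw [e30, e31, e32, e33] at hr3
      obtain ⟨μ, g0, g1, g2, g3⟩ := LKER a b c (p 0) (p 1) (p 2) (p 3) (v 0) (v 1) (v 2) (v 3)
        h1 h2 h3p h3m hp4 hE0 hE1 hE2 hE3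
        (by linear_combination hr0) (by linear_combination hr1)
        (by linear_combination hr2) (by linear_combination hr3)
      rw [Submodule.mem_span_singleton]
      refine ⟨μ, funext fun i => ?_⟩
      fin_cases i
      · simpa using g0.symm
      · simpa using g1.symm
      · simpa using g2.symm
      · simpa using g3.symm
    · rw [Submodule.span_singleton_le_iff_mem, LinearMap.mem_ker, Matrix.mulVecLin_apply]
      funext i
      fin_cases i
      · show M.mulVec p 0 = (0 : Fin 4 → ℂ) 0
        simp only [hM, Matrix.mulVec, dotProduct, Fin.sum_univ_four, Matrix.of_apply,
          Pi.zero_apply]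
        rw [e00, e01, e02, e03]
        linear_combination (3:ℂ) * hE0
      · show M.mulVec p 1 = (0 : Fin 4 → ℂ) 1
        simp only [hM, Matrix.mulVec, dotProduct, Fin.sum_univ_four, Matrix.of_apply,
          Pi.zero_apply]
        rw [e10, e11, e12, e13]
        linear_combination (3:ℂ) * hE1
      · show M.mulVec p 2 = (0 : Fin 4 → ℂ) 2
        simp only [hM, Matrix.mulVec, dotProduct, Fin.sum_univ_four, Matrix.of_apply,
          Pi.zero_apply]
        rw [e20, e21, e22, e23]
        linear_combination (3:ℂ) * hE2
      · show M.mulVec p 3 = (0 : Fin 4 → ℂ) 3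
        simp only [hM, Matrix.mulVec, dotProduct, Fin.sum_univ_four, Matrix.of_apply,
          Pi.zero_apply]
        rw [e30, e31, e32, e33]
        linear_combination (3:ℂ) * hE3
  have hfr := LinearMap.finrank_range_add_finrank_ker M.mulVecLin
  rw [hker, finrank_span_singleton hp] at hfr
  rw [Matrix.rank]
  simp only [Module.finrank_pi, Fintype.card_fin] at hfr
  omega
end
end

section
/- Let G be a finite subgroup of GL(V), let f be a nonzero homogeneous G-invariant polynomial function on V, and let v ∈ V∖{0} with f(v) = 0. If v is a smooth point of the projective hypersurface Z(f) (i.e. some partial derivative of f is nonzero at v), then the fixed subspace V^{G_v} of the stabilizer G_v = {g ∈ G : g·v = v} has dimension at least 2. -/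
noncomputable section
open MvPolynomial Matrix

/-! The stabilizer `G_v` fixes `v`, so the differential `L` of `f` at `v` is `G_v`-invariant.
By Euler's identity `L v = e f(v) = 0`, while `L ≠ 0` by smoothness. Averaging over the finite
group `G_v` a vector `u` with `L u ≠ 0` gives a `G_v`-fixed vector `w` with `L w = L u ≠ 0`;
then `v` and `w` are linearly independent fixed vectors. -/

theorem MvPolynomial.hasFDerivAt_eval {σ 𝕜 : Type*} [Fintype σ] [NontriviallyNormedField 𝕜]
    (f : MvPolynomial σ 𝕜) (v : σ → 𝕜) :
    HasFDerivAt (fun w => eval w f)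
      (∑ i, eval v (pderiv i f) • (ContinuousLinearMap.proj i : (σ → 𝕜) →L[𝕜] 𝕜)) v := by
  classical
  induction f using MvPolynomial.induction_on with
  | C a =>
    simp only [eval_C]
    refine (hasFDerivAt_const (𝕜 := 𝕜) a v).congr_fderiv ?_
    ext u
    simp
  | add p q hp hq =>
    simp only [map_add]
    refine (hp.add hq).congr_fderiv ?_
    ext u
    simp [add_mul, Finset.sum_add_distrib]
  | mul_X p j hp =>
    simp only [eval_mul, eval_X]
    refine (hp.mul (hasFDerivAt_apply j v)).congr_fderiv ?_
    ext u
    simp [pderiv_X, Pi.single_apply, apply_ite, mul_add, Finset.sum_add_distrib, Finset.mul_sum,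
      mul_comm, mul_left_comm]

theorem MvPolynomial.IsHomogeneous.sum_mul_eval_pderiv {σ R : Type*} [Fintype σ]
    [CommSemiring R] {φ : MvPolynomial σ R} {n : ℕ} (h : φ.IsHomogeneous n) (v : σ → R) :
    ∑ i, v i * eval v (pderiv i φ) = n * eval v φ := by
  simpa using congrArg (eval v) h.sum_X_mul_pderiv

theorem HasFDerivAt.comp_eq_of_forall_apply_eq {𝕜 E F : Type*} [NontriviallyNormedField 𝕜]
    [NormedAddCommGroup E] [NormedSpace 𝕜 E] [NormedAddCommGroup F] [NormedSpace 𝕜 F]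
    {φ : E → F} {L : E →L[𝕜] F} {v : E} (hφ : HasFDerivAt φ L v) (A : E →L[𝕜] E)
    (hA : ∀ w, φ (A w) = φ w) (hAv : A v = v) : L.comp A = L := by
  have hcomp : HasFDerivAt (φ ∘ A) (L.comp A) v := (hAv ▸ hφ).comp v A.hasFDerivAt
  rw [show φ ∘ A = φ from funext hA] at hcomp
  exact hcomp.unique hφ

theorem Representation.exists_mem_invariants_apply_ne_zero_s19 {k G V : Type*} [Field k]
    [CharZero k] [Group G] [Fintype G] [AddCommGroup V] [Module k V] (ρ : Representation k G V)
    (L : V →ₗ[k] k) (hL : ∀ g u, L (ρ g u) = L u) {u : V} (hu : L u ≠ 0) :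
    ∃ w ∈ ρ.invariants, L w ≠ 0 := by
  have hcard : (Fintype.card G : k) ≠ 0 := Nat.cast_ne_zero.mpr Fintype.card_ne_zero
  let _ := invertibleOfNonzero hcard
  refine ⟨ρ.averageMap u, ρ.averageMap_invariant u, ?_⟩
  have hLavg : L (ρ.averageMap u) = L u := by
    simp [GroupAlgebra.average, map_sum, hL, Finset.card_univ, ← Nat.cast_smul_eq_nsmul k]
  rwa [hLavg]

theorem Representation.two_le_finrank_invariants {k G V : Type*} [Field k] [CharZero k]
    [Group G] [Fintype G] [AddCommGroup V] [Module k V] [FiniteDimensional k V]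
    (ρ : Representation k G V) (L : V →ₗ[k] k) (hL : ∀ g u, L (ρ g u) = L u) {v u : V}
    (hv : v ∈ ρ.invariants) (hv0 : v ≠ 0) (hLv : L v = 0) (hu : L u ≠ 0) :
    2 ≤ Module.finrank k ρ.invariants := by
  obtain ⟨w, hw, hLw⟩ := ρ.exists_mem_invariants_apply_ne_zero_s19 L hL hu
  have hindep : LinearIndependent k ![(⟨v, hv⟩ : ρ.invariants), ⟨w, hw⟩] := by
    refine LinearIndependent.pair_iff.mpr fun s t hst => ?_
    have hst' : s • v + t • w = 0 := congrArg Subtype.val hst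
    have ht : t = 0 := by simpa [hLv, hLw] using congrArg L hst'
    subst ht
    exact ⟨(smul_eq_zero.mp (by simpa using hst')).resolve_right hv0, rfl⟩
  simpa using hindep.fintype_card_le_finrank

theorem fixedSpace_coe_subgroup {n : ℕ} (H : Subgroup (GL (Fin n) ℂ)) :
    fixedSpace (H : Set (GL (Fin n) ℂ)) =
      (Representation.ofDistribMulAction ℂ H (Fin n → ℂ)).invariants := by
  ext u
  exact ⟨fun hu g => hu g g.2, fun hu g hg => hu ⟨g, hg⟩⟩

theorem stmt_19_general {n e : ℕ} (G : Subgroup (GL (Fin n) ℂ)) (hG : Finite G)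
    (f : MvPolynomial (Fin n) ℂ) (hhom : f.IsHomogeneous e)
    (hinv : ∀ g ∈ G, ∀ w : Fin n → ℂ,
      MvPolynomial.eval ((g : Matrix (Fin n) (Fin n) ℂ).mulVec w) f = MvPolynomial.eval w f)
    (v : Fin n → ℂ) (hv0 : v ≠ 0) (hfv : MvPolynomial.eval v f = 0)
    (hsmooth : ∃ i, MvPolynomial.eval v (pderiv i f) ≠ 0) :
    2 ≤ Module.finrank ℂ
      (fixedSpace {g : GL (Fin n) ℂ |
        g ∈ G ∧ (g : Matrix (Fin n) (Fin n) ℂ).mulVec v = v}) := by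
  obtain ⟨i, hi⟩ := hsmooth
  let H := G ⊓ MulAction.stabilizer (GL (Fin n) ℂ) v
  have : Finite H := Finite.of_injective _ (Subgroup.inclusion_injective inf_le_left)
  let _ := Fintype.ofFinite H
  have hL := hasFDerivAt_eval f v
  set L := ∑ j, eval v (pderiv j f) • (ContinuousLinearMap.proj j : (Fin n → ℂ) →L[ℂ] ℂ)
  have hL_apply (u : Fin n → ℂ) : L u = ∑ j, u j * eval v (pderiv j f) := by
    simp [L, mul_comm]
  have hL_invariant (g : H) (u : Fin n → ℂ) : L (g • u) = L u := by
    obtain ⟨g, hgG, hgv⟩ := g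
    exact congrArg (· u) <| hL.comp_eq_of_forall_apply_eq
      (Matrix.mulVecLin (g : Matrix (Fin n) (Fin n) ℂ)).toContinuousLinearMap (hinv g hgG) hgv
  change 2 ≤ Module.finrank ℂ (fixedSpace (H : Set (GL (Fin n) ℂ)))
  rw [fixedSpace_coe_subgroup]
  refine Representation.two_le_finrank_invariants _ (L : (Fin n → ℂ) →ₗ[ℂ] ℂ)
    hL_invariant (v := v) (u := Pi.single i 1) (fun g => g.2.2) hv0 ?_ ?_
  · simp [hL_apply, hhom.sum_mul_eval_pderiv, hfv]
  · simpa [hL_apply, Pi.single_apply] using hi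

theorem stmt_19 {n e : ℕ} (G : Subgroup (GL (Fin n) ℂ)) (hG : Finite G)
    (f : MvPolynomial (Fin n) ℂ) (hf0 : f ≠ 0) (hhom : f.IsHomogeneous e)
    (hinv : ∀ g ∈ G, ∀ w : Fin n → ℂ,
      MvPolynomial.eval ((g : Matrix (Fin n) (Fin n) ℂ).mulVec w) f = MvPolynomial.eval w f)
    (v : Fin n → ℂ) (hv0 : v ≠ 0) (hfv : MvPolynomial.eval v f = 0)
    (hsmooth : ∃ i, MvPolynomial.eval v (pderiv i f) ≠ 0) :
    2 ≤ Module.finrank ℂ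
      (fixedSpace {g : GL (Fin n) ℂ |
        g ∈ G ∧ (g : Matrix (Fin n) (Fin n) ℂ).mulVec v = v}) :=
  stmt_19_general G hG f hhom hinv v hv0 hfv hsmooth
end
end
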